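/- arXiv:1408.0538 — 8 statements merged into one kernel-verified Lean document; each statement's English description precedes it below -/
import Mathlib

section
/- Let X be a square-integrable random variable on a probability space (Ω, F, μ) and let F₁, …, Fₙ be pairwise independent σ-subalgebras of F. Then Var(X) ≥ Σ_{i=1}^n Var(E[X | F_i]). -/
/-!
Write `Yᵢ = E[X | Fᵢ]`. Pulling the `Fᵢ`-measurable factor `Yᵢ` out of the conditional expectation
gives `Cov(X, Yᵢ) = Var(Yᵢ)`, and pairwise independence gives `Cov(Yᵢ, Yⱼ) = 0` for `i ≠ j`.
Expanding `0 ≤ Var(X - ∑ Yᵢ)` by bilinearity then leaves exactly `Var(X) - ∑ Var(Yᵢ)`.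
-/

open MeasureTheory ProbabilityTheory

namespace ProbabilityTheory

variable {Ω : Type*} {m m₁ m₂ m0 : MeasurableSpace Ω} {μ : Measure Ω}

lemma sum_variance_le_variance_of_covariance {ι : Type*} [Fintype ι] [IsFiniteMeasure μ]
    {X : Ω → ℝ} {Y : ι → Ω → ℝ} (hX : MemLp X 2 μ) (hY : ∀ i, MemLp (Y i) 2 μ)
    (hXY : ∀ i, cov[X, Y i; μ] = Var[Y i; μ])
    (hYY : Pairwise fun i j => cov[Y i, Y j; μ] = 0) :
    ∑ i, Var[Y i; μ] ≤ Var[X; μ] := by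
  have hsum : MemLp (∑ i, Y i) 2 μ := memLp_finsetSum' _ fun i _ => hY i
  have hcross : cov[X, ∑ i, Y i; μ] = ∑ i, Var[Y i; μ] := by
    rw [covariance_sum_right hY hX]
    exact Finset.sum_congr rfl fun i _ => hXY i
  have hdiag : Var[∑ i, Y i; μ] = ∑ i, Var[Y i; μ] := by
    rw [variance_sum hY]
    refine Finset.sum_congr rfl fun i _ => ?_
    rw [Finset.sum_eq_single i (fun j _ hji => hYY hji.symm) (by simp),
      covariance_self (hY i).aemeasurable]
  have := variance_nonneg (X - ∑ i, Y i) μ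
  rw [variance_sub hX hsum, hcross, hdiag] at this
  linarith

lemma integral_mul_condExp_self [IsFiniteMeasure μ] (hm : m ≤ m0) {X : Ω → ℝ}
    (hX : MemLp X 2 μ) :
    ∫ ω, X ω * μ[X | m] ω ∂μ = ∫ ω, μ[X | m] ω * μ[X | m] ω ∂μ := by
  have hprod : Integrable (μ[X | m] * X) μ := (hX.condExp one_le_two).integrable_mul hX
  calc ∫ ω, X ω * μ[X | m] ω ∂μ = ∫ ω, (μ[X | m] * X) ω ∂μ := by
        simp only [Pi.mul_apply, mul_comm]
    _ = ∫ ω, μ[μ[X | m] * X | m] ω ∂μ := (integral_condExp hm).symm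
    _ = ∫ ω, μ[X | m] ω * μ[X | m] ω ∂μ := integral_congr_ae <|
        condExp_mul_of_stronglyMeasurable_left stronglyMeasurable_condExp hprod
          (hX.integrable one_le_two)

lemma covariance_condExp_right [IsProbabilityMeasure μ] (hm : m ≤ m0) {X : Ω → ℝ}
    (hX : MemLp X 2 μ) :
    cov[X, μ[X | m]; μ] = Var[μ[X | m]; μ] := by
  have hY := hX.condExp (m := m) one_le_two
  rw [← covariance_self hY.aemeasurable, covariance_eq_sub hX hY, covariance_eq_sub hY hY,
    integral_condExp hm]
  simp only [Pi.mul_apply, integral_mul_condExp_self hm hX]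

lemma Indep.covariance_condExp_eq_zero (h : Indep m₁ m₂ μ)
    {X Y : Ω → ℝ} (hX : MemLp X 2 μ) (hY : MemLp Y 2 μ) :
    cov[μ[X | m₁], μ[Y | m₂]; μ] = 0 := by
  have hindep : IndepFun (μ[X | m₁]) (μ[Y | m₂]) μ :=
    indep_of_indep_of_le_right (indep_of_indep_of_le_left h
      stronglyMeasurable_condExp.measurable.comap_le) stronglyMeasurable_condExp.measurable.comap_le
  exact hindep.covariance_eq_zero (hX.condExp one_le_two) (hY.condExp one_le_two)

end ProbabilityTheory

theorem stmt_3 (Ω : Type*) [m0 : MeasurableSpace Ω] (μ : Measure Ω) [IsProbabilityMeasure μ]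
    (X : Ω → ℝ) (hX : MemLp X 2 μ)
    (n : ℕ) (F : Fin n → MeasurableSpace Ω) (hF : ∀ i, F i ≤ m0)
    (hindep : Pairwise fun i j => ProbabilityTheory.Indep (F i) (F j) μ) :
    ∑ i, variance (μ[X | F i]) μ ≤ variance X μ := by
  refine sum_variance_le_variance_of_covariance hX (fun i => hX.condExp one_le_two)
    (fun i => covariance_condExp_right (hF i) hX) fun i j hij => ?_
  exact (hindep hij).covariance_condExp_eq_zero hX hX
end

section
/- Let μ be a Borel measure on ℝ with μ(ℝ) ≤ 1 and μ({ζ : |ζ| > R}) ≤ C₀/R for all R ≥ C₁, where C₀, C₁ ≥ 1. Let I ⊂ ℝ be a nondegenerate bounded interval, m_I the uniform probability measure on I, and u(x) = ∫_ℝ log|x − ζ| dμ(ζ). Then the L²(I, m_I)-norm of u is at most A · max(1, log M, −log|I|, log C₀, log C₁) for some absolute constant A, where M = sup_{x ∈ I} |x| and |I| is the length of I. -/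
/-!
Write `T = max(C₀, C₁, M)`, `L = |I|` and split `|log y| = log⁺ y + log⁺ y⁻¹`. For `|x| ≤ T`,
`log⁺ |x - ζ| ≤ log 2 + log⁺ T + log⁺ (|ζ| / T)` and
`log⁺ |x - ζ|⁻¹ ≤ log⁺ L⁻¹ + log⁺ (L / |x - ζ|)`.
Both remaining terms are handled by a dyadic layer-cake count, `log⁺ z ≤ #{k | 2 ^ k < z}` and
`(log⁺ z) ^ 2 ≤ ∑_{2 ^ k < z} (2k + 1)`: the tail bound gives `μ {|ζ| > T 2 ^ k} ≤ 2⁻ᵏ`, so the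
first has `μ`-integral at most `2`, while `|{x | |x - ζ| < L 2⁻ᵏ}| ≤ 2 L 2⁻ᵏ` bounds the `L²(m_I)`
norm of the second uniformly in `ζ`; Cauchy–Schwarz in `ζ` (as `μ(ℝ) ≤ 1`) and Tonelli carry
this over to its `μ`-average. Every constant is `O(max(1, log T, log⁺ L⁻¹))`.
-/

open MeasureTheory Real Set
open scoped ENNReal

noncomputable def logPotential (μ : Measure ℝ) (x : ℝ) : ℝ := ∫ ζ, log |x - ζ| ∂μ

noncomputable def uniformOnIcc (a b : ℝ) : Measure ℝ :=
  (ENNReal.ofReal (b - a))⁻¹ • volume.restrict (Icc a b)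

lemma exists_le_two_pow_and_forall_two_pow_lt (z : ℝ) :
    ∃ n : ℕ, z ≤ 2 ^ n ∧ ∀ k < n, (2 : ℝ) ^ k < z := by
  have h : ∃ n : ℕ, z ≤ 2 ^ n := (pow_unbounded_of_one_lt z one_lt_two).imp fun _ => le_of_lt
  exact ⟨Nat.find h, Nat.find_spec h, fun k hk => not_le.1 (Nat.find_min h hk)⟩

lemma ofReal_le_tsum_indicator_Ioi_two_pow {y z : ℝ} {w : ℕ → ℝ≥0∞}
    (h : ∀ n : ℕ, z ≤ 2 ^ n → ENNReal.ofReal y ≤ ∑ k ∈ Finset.range n, w k) :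
    ENNReal.ofReal y ≤ ∑' k : ℕ, (Ioi ((2 : ℝ) ^ k)).indicator (fun _ => w k) z := by
  obtain ⟨n, hzn, hlt⟩ := exists_le_two_pow_and_forall_two_pow_lt z
  calc ENNReal.ofReal y ≤ ∑ k ∈ Finset.range n, w k := h n hzn
    _ = ∑ k ∈ Finset.range n, (Ioi ((2 : ℝ) ^ k)).indicator (fun _ => w k) z :=
        Finset.sum_congr rfl fun k hk =>
          (indicator_of_mem (hlt k (Finset.mem_range.1 hk)) (fun _ => w k)).symm
    _ ≤ _ := ENNReal.sum_le_tsum _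

lemma posLog_le_of_le_two_pow {z : ℝ} (hz : 0 ≤ z) {n : ℕ} (h : z ≤ 2 ^ n) : log⁺ z ≤ n :=
  calc log⁺ z ≤ log⁺ (2 ^ n) := posLog_le_posLog hz h
    _ = n * log 2 := by rw [posLog_pow, posLog_eq_log (by norm_num)]
    _ ≤ n := mul_le_of_le_one_right n.cast_nonneg (log_two_lt_d9.le.trans (by norm_num))

lemma ENNReal.sum_range_two_mul_add_one (n : ℕ) :
    ∑ k ∈ Finset.range n, (2 * k + 1 : ℝ≥0∞) = n ^ 2 := by
  induction n with
  | zero => simp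
  | succ n ih => rw [Finset.sum_range_succ, ih]; push_cast; ring

lemma ENNReal.tsum_two_mul_add_one_mul_inv_two_pow :
    ∑' k : ℕ, (2 * k + 1 : ℝ≥0∞) * 2⁻¹ ^ k = 6 := by
  have hr : ‖(2⁻¹ : ℝ)‖ < 1 := by norm_num
  have hs : Summable fun k : ℕ => (k : ℝ) * 2⁻¹ ^ k :=
    (hasSum_coe_mul_geometric_of_norm_lt_one hr).summable
  have hg : Summable fun k : ℕ => (2⁻¹ : ℝ) ^ k :=
    summable_geometric_of_lt_one (by norm_num) (by norm_num)
  have hreal : ∑' k : ℕ, (2 * k + 1 : ℝ) * 2⁻¹ ^ k = 6 := by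
    simp only [add_mul, mul_assoc, one_mul]
    rw [(hs.mul_left 2).tsum_add hg, tsum_mul_left, tsum_coe_mul_geometric_of_norm_lt_one hr,
      tsum_geometric_inv_two]
    norm_num
  rw [← ENNReal.ofReal_ofNat 6, ← hreal, ENNReal.ofReal_tsum_of_nonneg (fun k => by positivity)
    ((hs.mul_left 2).add hg |>.congr fun k => by ring)]
  refine tsum_congr fun k => ?_
  rw [ENNReal.ofReal_mul (by positivity), ENNReal.ofReal_pow (by norm_num),
    ENNReal.ofReal_inv_of_pos two_pos]
  congr 1
  · rw [show (2 * k + 1 : ℝ) = ((2 * k + 1 : ℕ) : ℝ) by push_cast; ring, ENNReal.ofReal_natCast]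
    push_cast
    rfl
  · simp

section LayerCake

variable {α : Type*} [MeasurableSpace α] {μ : Measure α} {f : α → ℝ}

lemma lintegral_tsum_indicator_Ioi_two_pow (hf : Measurable f) (w : ℕ → ℝ≥0∞) :
    ∫⁻ a, ∑' k : ℕ, (Ioi ((2 : ℝ) ^ k)).indicator (fun _ => w k) (f a) ∂μ =
      ∑' k : ℕ, w k * μ (f ⁻¹' Ioi (2 ^ k)) := by
  refine (lintegral_tsum fun k => ?_).trans (tsum_congr fun k => ?_)
  · exact ((measurable_const.indicator measurableSet_Ioi).comp hf).aemeasurable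
  · exact lintegral_indicator_const_comp hf measurableSet_Ioi _

lemma lintegral_ofReal_posLog_le_tsum (hf : Measurable f) (hf0 : ∀ a, 0 ≤ f a) :
    ∫⁻ a, ENNReal.ofReal (log⁺ (f a)) ∂μ ≤ ∑' k : ℕ, μ (f ⁻¹' Ioi (2 ^ k)) := by
  have hsum := lintegral_tsum_indicator_Ioi_two_pow (μ := μ) hf fun _ => 1
  simp only [one_mul] at hsum
  rw [← hsum]
  refine lintegral_mono fun a => ofReal_le_tsum_indicator_Ioi_two_pow fun n hn => ?_
  simpa using ENNReal.ofReal_le_ofReal (posLog_le_of_le_two_pow (hf0 a) hn)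

lemma lintegral_ofReal_posLog_sq_le_tsum (hf : Measurable f) (hf0 : ∀ a, 0 ≤ f a) :
    ∫⁻ a, ENNReal.ofReal (log⁺ (f a) ^ 2) ∂μ ≤
      ∑' k : ℕ, (2 * k + 1) * μ (f ⁻¹' Ioi (2 ^ k)) := by
  rw [← lintegral_tsum_indicator_Ioi_two_pow hf]
  refine lintegral_mono fun a => ofReal_le_tsum_indicator_Ioi_two_pow fun n hn => ?_
  rw [ENNReal.sum_range_two_mul_add_one, ← ENNReal.ofReal_natCast,
    ← ENNReal.ofReal_pow n.cast_nonneg]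
  exact ENNReal.ofReal_le_ofReal
    (pow_le_pow_left₀ posLog_nonneg (posLog_le_of_le_two_pow (hf0 a) hn) 2)

end LayerCake

section CauchySchwarz

variable {α β : Type*} [MeasurableSpace α] [MeasurableSpace β]

lemma eLpNorm_two_sq_eq_lintegral_sq (μ : Measure α) (f : α → ℝ≥0∞) :
    eLpNorm f 2 μ ^ 2 = ∫⁻ a, f a ^ 2 ∂μ := by
  rw [eLpNorm_eq_lintegral_rpow_enorm_toReal two_ne_zero ENNReal.ofNat_ne_top,
    ← ENNReal.rpow_natCast, ← ENNReal.rpow_mul]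
  simp

lemma sq_lintegral_le_lintegral_sq {μ : Measure α} (hμ : μ univ ≤ 1) {f : α → ℝ≥0∞}
    (hf : AEMeasurable f μ) : (∫⁻ a, f a ∂μ) ^ 2 ≤ ∫⁻ a, f a ^ 2 ∂μ := by
  have h := eLpNorm_le_eLpNorm_mul_rpow_measure_univ one_le_two hf.aestronglyMeasurable
  rw [eLpNorm_one_eq_lintegral_enorm] at h
  rw [← eLpNorm_two_sq_eq_lintegral_sq]
  refine pow_le_pow_left₀ zero_le (h.trans (mul_le_of_le_one_right zero_le ?_)) 2
  exact ENNReal.rpow_le_one hμ (by norm_num)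

lemma eLpNorm_lintegral_le {μ : Measure β} [SFinite μ] {ν : Measure α} [SFinite ν]
    (hμ : μ univ ≤ 1) {h : α → β → ℝ≥0∞} (hh : Measurable (Function.uncurry h)) {c : ℝ≥0∞}
    (hc : ∀ b, ∫⁻ a, h a b ^ 2 ∂ν ≤ c ^ 2) :
    eLpNorm (fun a => ∫⁻ b, h a b ∂μ) 2 ν ≤ c := by
  refine (ENNReal.pow_le_pow_left_iff two_ne_zero).1 ?_
  calc eLpNorm (fun a => ∫⁻ b, h a b ∂μ) 2 ν ^ 2 = ∫⁻ a, (∫⁻ b, h a b ∂μ) ^ 2 ∂ν :=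
        eLpNorm_two_sq_eq_lintegral_sq _ _
    _ ≤ ∫⁻ a, ∫⁻ b, h a b ^ 2 ∂μ ∂ν :=
        lintegral_mono fun a => sq_lintegral_le_lintegral_sq hμ hh.of_uncurry_left.aemeasurable
    _ = ∫⁻ b, ∫⁻ a, h a b ^ 2 ∂ν ∂μ := lintegral_lintegral_swap (hh.pow_const 2).aemeasurable
    _ ≤ ∫⁻ _, c ^ 2 ∂μ := lintegral_mono hc
    _ ≤ c ^ 2 := by rw [lintegral_const]; exact mul_le_of_le_one_right zero_le hμ

end CauchySchwarz

lemma abs_log_eq_posLog_add_posLog_inv (y : ℝ) : |log y| = log⁺ y + log⁺ y⁻¹ := by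
  linarith [posLog_sub_posLog_inv (x := y), half_mul_log_add_log_abs (x := y)]

lemma abs_log_abs_sub_le {x ζ T L : ℝ} (hT : 0 < T) (hx : |x| ≤ T) (hL : 0 < L) :
    |log (|x - ζ|)| ≤ log 2 + log⁺ T + log⁺ L⁻¹ + log⁺ (|ζ| / T) + log⁺ (L / |x - ζ|) := by
  have hfar : log⁺ |x - ζ| ≤ log 2 + log⁺ T + log⁺ (|ζ| / T) :=
    calc log⁺ |x - ζ| ≤ log⁺ (T * (1 + |ζ| / T)) := by
          refine posLog_le_posLog (abs_nonneg _) ?_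
          rw [mul_add, mul_one, mul_div_cancel₀ _ hT.ne']
          linarith [abs_sub x ζ]
      _ ≤ log⁺ T + (log 2 + log⁺ 1 + log⁺ (|ζ| / T)) :=
          posLog_mul.trans (add_le_add_right posLog_add _)
      _ = _ := by rw [posLog_one]; ring
  have hnear : log⁺ |x - ζ|⁻¹ ≤ log⁺ L⁻¹ + log⁺ (L / |x - ζ|) :=
    calc log⁺ |x - ζ|⁻¹ = log⁺ (L⁻¹ * (L / |x - ζ|)) := by
          rw [div_eq_mul_inv, inv_mul_cancel_left₀ hL.ne']
      _ ≤ _ := posLog_mul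
  rw [abs_log_eq_posLog_add_posLog_inv]
  linarith

lemma ofReal_div_mul_two_pow_le_inv_two_pow {c R : ℝ} (hcR : c ≤ R) (hR : 0 < R) (k : ℕ) :
    ENNReal.ofReal (c / (R * 2 ^ k)) ≤ 2⁻¹ ^ k := by
  rw [← ENNReal.ofReal_ofNat 2, ← ENNReal.ofReal_inv_of_pos two_pos,
    ← ENNReal.ofReal_pow (by norm_num)]
  refine ENNReal.ofReal_le_ofReal ?_
  rw [div_le_iff₀ (by positivity), inv_pow, mul_comm R, ← mul_assoc,
    inv_mul_cancel₀ (by positivity), one_mul]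
  exact hcR

lemma lintegral_ofReal_posLog_abs_div_le_two {μ : Measure ℝ} {C₀ C₁ T : ℝ} (hC₀T : C₀ ≤ T)
    (hC₁T : C₁ ≤ T) (hT : 0 < T)
    (htail : ∀ R : ℝ, C₁ ≤ R → μ {ζ : ℝ | |ζ| > R} ≤ ENNReal.ofReal (C₀ / R)) :
    ∫⁻ ζ, ENNReal.ofReal (log⁺ (|ζ| / T)) ∂μ ≤ 2 := by
  refine (lintegral_ofReal_posLog_le_tsum (by fun_prop) fun ζ => by positivity).trans ?_
  calc ∑' k : ℕ, μ ((fun ζ => |ζ| / T) ⁻¹' Ioi (2 ^ k)) ≤ ∑' k : ℕ, (2⁻¹ : ℝ≥0∞) ^ k := by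
        refine ENNReal.tsum_le_tsum fun k => ?_
        have hset : (fun ζ => |ζ| / T) ⁻¹' Ioi (2 ^ k) = {ζ : ℝ | |ζ| > T * 2 ^ k} := by
          ext ζ
          simp [lt_div_iff₀ hT, mul_comm]
        rw [hset]
        exact (htail _ (hC₁T.trans (le_mul_of_one_le_right hT.le (one_le_pow₀ one_le_two)))).trans
          (ofReal_div_mul_two_pow_le_inv_two_pow hC₀T hT k)
    _ = 2 := by rw [ENNReal.tsum_geometric, ENNReal.one_sub_inv_two, inv_inv]

lemma lintegral_ofReal_posLog_div_abs_sub_sq_le {L : ℝ} (hL : 0 < L) (ζ : ℝ) :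
    ∫⁻ x, ENNReal.ofReal (log⁺ (L / |x - ζ|) ^ 2) ≤ 12 * ENNReal.ofReal L := by
  refine (lintegral_ofReal_posLog_sq_le_tsum (by fun_prop) fun x => by positivity).trans ?_
  calc ∑' k : ℕ, (2 * k + 1) * volume ((fun x => L / |x - ζ|) ⁻¹' Ioi (2 ^ k))
      ≤ ∑' k : ℕ, (2 * k + 1) * (2 * ENNReal.ofReal L * 2⁻¹ ^ k) := by
        refine ENNReal.tsum_le_tsum fun k => ?_
        gcongr
        have hsub : (fun x => L / |x - ζ|) ⁻¹' Ioi (2 ^ k) ⊆ Metric.ball ζ (L / 2 ^ k) := by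
          intro x hx
          -- `L / 0 = 0`, so the centre `x = ζ` is not in the preimage
          have hx0 : 0 < |x - ζ| := by
            by_contra h
            simp [le_antisymm (not_lt.1 h) (abs_nonneg _)] at hx
            exact absurd hx (not_lt.2 (by positivity))
          rw [Metric.mem_ball, dist_eq_norm, Real.norm_eq_abs, lt_div_iff₀ (by positivity),
            mul_comm]
          exact (lt_div_iff₀ hx0).1 hx
        refine (measure_mono hsub).trans_eq ?_
        rw [Real.volume_ball, ENNReal.ofReal_mul zero_le_two,
          ENNReal.ofReal_div_of_pos (by positivity), div_eq_mul_inv,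
          ENNReal.ofReal_pow zero_le_two, ENNReal.inv_pow]
        simp [mul_assoc]
    _ = 12 * ENNReal.ofReal L := by
        simp_rw [mul_left_comm _ (2 * ENNReal.ofReal L)]
        rw [ENNReal.tsum_mul_left, ENNReal.tsum_two_mul_add_one_mul_inv_two_pow]
        ring

lemma enorm_logPotential_le {μ : Measure ℝ} (hμ : μ univ ≤ 1) {C₀ C₁ T L : ℝ}
    (hC₀T : C₀ ≤ T) (hC₁T : C₁ ≤ T) (hT : 0 < T)
    (htail : ∀ R : ℝ, C₁ ≤ R → μ {ζ : ℝ | |ζ| > R} ≤ ENNReal.ofReal (C₀ / R))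
    (hL : 0 < L) {x : ℝ} (hx : |x| ≤ T) :
    ‖logPotential μ x‖ₑ ≤ ENNReal.ofReal (log 2 + log⁺ T + log⁺ L⁻¹ + 2) +
      ∫⁻ ζ, ENNReal.ofReal (log⁺ (L / |x - ζ|)) ∂μ := by
  set c := log 2 + log⁺ T + log⁺ L⁻¹
  have hc : 0 ≤ c :=
    add_nonneg (add_nonneg (log_pos one_lt_two).le posLog_nonneg) posLog_nonneg
  calc ‖logPotential μ x‖ₑ ≤ ∫⁻ ζ, ‖log |x - ζ|‖ₑ ∂μ := enorm_integral_le_lintegral_enorm _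
    _ ≤ ∫⁻ ζ, (ENNReal.ofReal c + ENNReal.ofReal (log⁺ (|ζ| / T)) +
          ENNReal.ofReal (log⁺ (L / |x - ζ|))) ∂μ := by
        refine lintegral_mono fun ζ => ?_
        rw [enorm_eq_ofReal_abs, ← ENNReal.ofReal_add hc posLog_nonneg,
          ← ENNReal.ofReal_add (add_nonneg hc posLog_nonneg) posLog_nonneg]
        exact ENNReal.ofReal_le_ofReal (abs_log_abs_sub_le hT hx hL)
    _ = ENNReal.ofReal c * μ univ + ∫⁻ ζ, ENNReal.ofReal (log⁺ (|ζ| / T)) ∂μ +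
          ∫⁻ ζ, ENNReal.ofReal (log⁺ (L / |x - ζ|)) ∂μ := by
        rw [lintegral_add_right _ (by fun_prop), lintegral_add_left (by fun_prop),
          lintegral_const]
    _ ≤ ENNReal.ofReal c * 1 + 2 + ∫⁻ ζ, ENNReal.ofReal (log⁺ (L / |x - ζ|)) ∂μ := by
        gcongr
        exact lintegral_ofReal_posLog_abs_div_le_two hC₀T hC₁T hT htail
    _ = _ := by rw [mul_one, ENNReal.ofReal_add hc zero_le_two, ENNReal.ofReal_ofNat]

lemma isProbabilityMeasure_uniformOnIcc {a b : ℝ} (hab : a < b) :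
    IsProbabilityMeasure (uniformOnIcc a b) := by
  rw [uniformOnIcc, ← Real.volume_Icc]
  exact ProbabilityTheory.cond_isProbabilityMeasure_of_finite (by simp [hab]) (by simp)

lemma lintegral_uniformOnIcc_ofReal_posLog_div_abs_sub_sq_le {a b : ℝ} (hab : a < b) (ζ : ℝ) :
    ∫⁻ x, ENNReal.ofReal (log⁺ ((b - a) / |x - ζ|)) ^ 2 ∂uniformOnIcc a b ≤ 12 := by
  simp_rw [uniformOnIcc, lintegral_smul_measure, smul_eq_mul,
    ← ENNReal.ofReal_pow posLog_nonneg]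
  calc (ENNReal.ofReal (b - a))⁻¹ * ∫⁻ x in Icc a b, ENNReal.ofReal (log⁺ ((b - a) / |x - ζ|) ^ 2)
      ≤ (ENNReal.ofReal (b - a))⁻¹ * (12 * ENNReal.ofReal (b - a)) := by
        gcongr
        exact (setLIntegral_le_lintegral _ _).trans
          (lintegral_ofReal_posLog_div_abs_sub_sq_le (sub_pos.2 hab) ζ)
    _ = 12 := by
        rw [mul_comm 12, ← mul_assoc, ENNReal.inv_mul_cancel (by simp [hab]) ENNReal.ofReal_ne_top,
          one_mul]

lemma eLpNorm_logPotential_uniformOnIcc_le {μ : Measure ℝ} (hμ : μ univ ≤ 1) {C₀ C₁ T : ℝ}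
    (hC₀T : C₀ ≤ T) (hC₁T : C₁ ≤ T) (hT : 0 < T)
    (htail : ∀ R : ℝ, C₁ ≤ R → μ {ζ : ℝ | |ζ| > R} ≤ ENNReal.ofReal (C₀ / R))
    {a b : ℝ} (hab : a < b) (habT : max |a| |b| ≤ T) :
    eLpNorm (logPotential μ) 2 (uniformOnIcc a b) ≤
      ENNReal.ofReal (log 2 + log⁺ T + log⁺ (b - a)⁻¹ + 6) := by
  have := isProbabilityMeasure_uniformOnIcc hab
  have : IsFiniteMeasure μ := ⟨hμ.trans_lt ENNReal.one_lt_top⟩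
  set c := log 2 + log⁺ T + log⁺ (b - a)⁻¹ + 2
  have hc : 0 ≤ c := by
    linarith [log_pos one_lt_two, posLog_nonneg (x := T), posLog_nonneg (x := (b - a)⁻¹)]
  set h : ℝ → ℝ → ℝ≥0∞ := fun x ζ => ENNReal.ofReal (log⁺ ((b - a) / |x - ζ|))
  have hh : Measurable (Function.uncurry h) :=
    ENNReal.measurable_ofReal.comp (continuous_posLog.measurable.comp (by fun_prop))
  have hpt : ∀ᵐ x ∂uniformOnIcc a b,
      ‖logPotential μ x‖ₑ ≤ ‖ENNReal.ofReal c + ∫⁻ ζ, h x ζ ∂μ‖ₑ := by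
    filter_upwards [Measure.ae_smul_measure (ae_restrict_mem measurableSet_Icc) _] with x hx
    exact enorm_logPotential_le hμ hC₀T hC₁T hT htail (sub_pos.2 hab)
      ((abs_le_max_abs_abs hx.1 hx.2).trans habT)
  calc eLpNorm (logPotential μ) 2 (uniformOnIcc a b)
      ≤ eLpNorm (fun x => ENNReal.ofReal c + ∫⁻ ζ, h x ζ ∂μ) 2 (uniformOnIcc a b) :=
        eLpNorm_mono_enorm_ae hpt
    _ ≤ eLpNorm (fun _ => ENNReal.ofReal c) 2 (uniformOnIcc a b) +
          eLpNorm (fun x => ∫⁻ ζ, h x ζ ∂μ) 2 (uniformOnIcc a b) :=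
        eLpNorm_add_le (f := fun _ => ENNReal.ofReal c) (g := fun x => ∫⁻ ζ, h x ζ ∂μ)
          aestronglyMeasurable_const hh.lintegral_prod_right'.aestronglyMeasurable one_le_two
    _ ≤ ENNReal.ofReal c + 4 := by
        gcongr
        · rw [eLpNorm_const _ two_ne_zero (NeZero.ne _), measure_univ]
          simp
        · refine eLpNorm_lintegral_le hμ hh fun ζ => ?_
          exact (lintegral_uniformOnIcc_ofReal_posLog_div_abs_sub_sq_le hab ζ).trans
            (by norm_num)
    _ = _ := by
        rw [← ENNReal.ofReal_ofNat 4, ← ENNReal.ofReal_add hc (by norm_num)]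
        congr 1
        simp only [c]
        ring

theorem stmt_5 :
    ∃ A : ℝ, 0 < A ∧
      ∀ (μ : Measure ℝ) (_ : μ Set.univ ≤ 1) (C₀ C₁ : ℝ) (_ : 1 ≤ C₀) (_ : 1 ≤ C₁)
        (_ : ∀ R : ℝ, C₁ ≤ R → μ {ζ : ℝ | |ζ| > R} ≤ ENNReal.ofReal (C₀ / R))
        (a b : ℝ) (_ : a < b),
        (eLpNorm (fun x => ∫ ζ, Real.log |x - ζ| ∂μ) 2
            ((ENNReal.ofReal (b - a))⁻¹ • volume.restrict (Set.Icc a b))).toReal ≤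
          A * max 1 (max (Real.log (max |a| |b|))
            (max (-Real.log (b - a)) (max (Real.log C₀) (Real.log C₁)))) := by
  refine ⟨9, by norm_num, fun μ hμ C₀ C₁ hC₀ _ htail a b hab => ?_⟩
  set K := max 1 (max (log (max |a| |b|)) (max (-log (b - a)) (max (log C₀) (log C₁))))
  have hK : 1 ≤ K := le_max_left _ _
  have hle_exp : ∀ y, log y ≤ K → y ≤ exp K := fun y hy => (le_exp_log y).trans (exp_le_exp.2 hy)
  set T := max (max C₀ C₁) (max |a| |b|)
  have hT : 0 < T := zero_lt_one.trans_le (hC₀.trans ((le_max_left _ _).trans (le_max_left _ _)))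
  have hTK : log⁺ T ≤ K := max_le (by linarith) <| (log_le_iff_le_exp hT).2 <|
    max_le (max_le (hle_exp _ (by simp [K])) (hle_exp _ (by simp [K]))) (hle_exp _ (by simp [K]))
  have hLK : log⁺ (b - a)⁻¹ ≤ K := by
    rw [posLog_apply, log_inv]
    exact max_le (by linarith) (by simp [K])
  refine ENNReal.toReal_le_of_le_ofReal (by positivity) <|
    (eLpNorm_logPotential_uniformOnIcc_le hμ ((le_max_left _ _).trans (le_max_left _ _))
      ((le_max_right _ _).trans (le_max_left _ _)) hT htail hab (le_max_right _ _)).trans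
      (ENNReal.ofReal_le_ofReal ?_)
  linarith [log_two_lt_d9]
end

section
/- Let H₁ and H₂ be self-adjoint (symmetric real) operators on the same finite-dimensional real inner product space, and let E ∈ ℝ with E not an eigenvalue of H₁ nor of H₂. Then log|det(H₁ − E)| − log|det(H₂ − E)| ≤ 4·rank(H₁ − H₂)·max( log⁺(|E| + ‖H₁‖), log⁻ dist(E, spec H₂) ), where log⁺ t = max(log t, 0), log⁻ t = max(−log t, 0), ‖H₁‖ is the operator norm, and dist(E, spec H₂) is the distance from E to the set of eigenvalues of H₂. -/
/-!
Write `H₁ - E = T (H₂ - E)` with `T = (H₁ - E)(H₂ - E)⁻¹ = 1 + (H₁ - H₂)(H₂ - E)⁻¹`. Then `T` is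
the identity modulo the range `V` of `H₁ - H₂`, so `det T = det (T|_V)`, and comparing the
Haar volume of the unit ball with that of its image gives `|det (T|_V)| ≤ ‖T‖ ^ dim V`.
Finally `‖T‖ ≤ (|E| + ‖H₁‖) / dist(E, spec H₂)`, because in an eigenbasis of the self-adjoint
`H₂` the operator `H₂ - E` is diagonal with entries of modulus at least `dist(E, spec H₂)`.
-/

open Real Module MeasureTheory

theorem LinearMap.det_eq_det_restrict_of_sub_mem {K M : Type*} [Field K] [AddCommGroup M]
    [Module K M] [FiniteDimensional K M] {V : Submodule K M} {T : M →ₗ[K] M}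
    (hT : ∀ x, T x - x ∈ V) (hV : ∀ x ∈ V, T x ∈ V) :
    T.det = (T.restrict hV).det := by
  have hQ : V.mapQ V T hV = LinearMap.id := by
    ext x
    exact (Submodule.Quotient.eq V).2 (hT x)
  rw [LinearMap.det_eq_det_mul_det V T hV, hQ, LinearMap.det_id, mul_one]

theorem LinearMap.abs_det_le_pow_finrank_of_norm_le {E : Type*} [NormedAddCommGroup E]
    [NormedSpace ℝ E] [FiniteDimensional ℝ E] (f : E →ₗ[ℝ] E) {C : ℝ} (hC : 0 ≤ C)
    (hf : ∀ x, ‖f x‖ ≤ C * ‖x‖) : |f.det| ≤ C ^ finrank ℝ E := by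
  borelize E
  let μ : Measure E := Measure.addHaar
  have hball : f '' Metric.closedBall 0 1 ⊆ Metric.closedBall 0 C := by
    rintro _ ⟨x, hx, rfl⟩
    rw [mem_closedBall_zero_iff] at hx ⊢
    simpa using (hf x).trans (mul_le_of_le_one_right hC hx)
  have hvol := measure_mono (μ := μ) hball
  rw [Measure.addHaar_image_linearMap, Measure.addHaar_closedBall' μ 0 hC] at hvol
  have h0 : μ (Metric.closedBall 0 1) ≠ 0 := (Metric.measure_closedBall_pos μ 0 one_pos).ne'
  have htop : μ (Metric.closedBall 0 1) ≠ ⊤ := measure_closedBall_lt_top.ne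
  exact (ENNReal.ofReal_le_ofReal_iff (by positivity)).1
    ((ENNReal.mul_le_mul_iff_left h0 htop).1 hvol)

theorem isUnit_sub_smul_one_of_notMem_spectrum {R A : Type*} [CommRing R] [Ring A]
    [Algebra R A] {a : A} {r : R} (h : r ∉ spectrum R a) : IsUnit (a - r • 1) := by
  rw [← Algebra.algebraMap_eq_smul_one]
  exact IsUnit.sub_iff.1 (spectrum.notMem_iff.1 h)

namespace ContinuousLinearMap

variable {E : Type*} [NormedAddCommGroup E] [NormedSpace ℝ E] [FiniteDimensional ℝ E]

theorem mem_spectrum_of_hasEigenvalue {H : E →L[ℝ] E} {μ : ℝ}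
    (hμ : Module.End.HasEigenvalue (H : E →ₗ[ℝ] E) μ) : μ ∈ spectrum ℝ H := by
  rw [spectrum_eq]
  exact hμ.mem_spectrum

theorem det_sub_smul_one_ne_zero {H : E →L[ℝ] E} {μ : ℝ} (h : μ ∉ spectrum ℝ H) :
    ((H - μ • 1 : E →L[ℝ] E) : E →ₗ[ℝ] E).det ≠ 0 :=
  ((LinearMap.isUnit_iff_isUnit_det _).1
    (isUnit_iff_isUnit_toLinearMap.1 (isUnit_sub_smul_one_of_notMem_spectrum h))).ne_zero

theorem abs_det_le_abs_det_mul_pow_finrank_range_sub (A B : E →L[ℝ] E) (hB : IsUnit B) :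
    |(A : E →ₗ[ℝ] E).det| ≤ |(B : E →ₗ[ℝ] E).det| *
      (‖A‖ * ‖Ring.inverse B‖) ^ finrank ℝ (LinearMap.range ((A - B : E →L[ℝ] E) : E →ₗ[ℝ] E)) := by
  set T := A * Ring.inverse B
  set V := LinearMap.range ((A - B : E →L[ℝ] E) : E →ₗ[ℝ] E)
  have hTB : T * B = A := by rw [mul_assoc, Ring.inverse_mul_cancel B hB, mul_one]
  have hdet : (A : E →ₗ[ℝ] E).det = (T : E →ₗ[ℝ] E).det * (B : E →ₗ[ℝ] E).det := by
    rw [← hTB, toLinearMap_mul, map_mul]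
  have hBinv : ∀ x, B (Ring.inverse B x) = x := fun x =>
    DFunLike.congr_fun (Ring.mul_inverse_cancel B hB) x
  have hT : ∀ x, T x - x ∈ V := fun x => ⟨Ring.inverse B x, by simp [T, hBinv]⟩
  have hV : ∀ x ∈ V, T x ∈ V := fun x hx => by
    simpa using V.add_mem (hT x) hx
  have hnorm : ∀ v : V, ‖(T : E →ₗ[ℝ] E).restrict hV v‖ ≤ ‖A‖ * ‖Ring.inverse B‖ * ‖v‖ :=
    fun v => (T.le_opNorm v).trans (mul_le_mul_of_nonneg_right (norm_mul_le _ _) (norm_nonneg _))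
  rw [hdet, abs_mul, mul_comm, LinearMap.det_eq_det_restrict_of_sub_mem hT hV]
  gcongr
  exact LinearMap.abs_det_le_pow_finrank_of_norm_le _ (by positivity) hnorm

end ContinuousLinearMap

namespace IsSelfAdjoint

variable {F : Type*} [NormedAddCommGroup F] [InnerProductSpace ℝ F] [FiniteDimensional ℝ F]
  {H : F →L[ℝ] F}

theorem spectrum_real_nonempty [Nontrivial F] (hH : IsSelfAdjoint H) :
    (spectrum ℝ H).Nonempty :=
  ⟨_, ContinuousLinearMap.mem_spectrum_of_hasEigenvalue
    hH.isSymmetric.hasEigenvalue_iSup_of_finiteDimensional⟩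

theorem infDist_spectrum_mul_norm_le (hH : IsSelfAdjoint H) (E : ℝ) (x : F) :
    Metric.infDist E (spectrum ℝ H) * ‖x‖ ≤ ‖(H - E • 1) x‖ := by
  set d := Metric.infDist E (spectrum ℝ H)
  have hS := hH.isSymmetric
  let b := hS.eigenvectorBasis rfl
  let μ := hS.eigenvalues rfl
  have hrepr : ∀ i, b.repr ((H - E • 1) x) i = (μ i - E) * b.repr x i := fun i => by
    have hHx : b.repr (H x) i = μ i * b.repr x i := by
      simpa using hS.eigenvectorBasis_apply_self_apply rfl x i
    simp [sub_mul, hHx]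
  have hdist : ∀ i, d ≤ |μ i - E| := fun i => by
    rw [abs_sub_comm, ← Real.dist_eq]
    exact Metric.infDist_le_dist_of_mem
      (ContinuousLinearMap.mem_spectrum_of_hasEigenvalue (hS.hasEigenvalue_eigenvalues rfl i))
  have hd : 0 ≤ d := Metric.infDist_nonneg
  have hsq : (d * ‖x‖) ^ 2 ≤ ‖(H - E • 1) x‖ ^ 2 := by
    rw [← b.repr.norm_map x, ← b.repr.norm_map ((H - E • 1) x), mul_pow,
      EuclideanSpace.real_norm_sq_eq, EuclideanSpace.real_norm_sq_eq, Finset.mul_sum]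
    refine Finset.sum_le_sum fun i _ => ?_
    rw [hrepr, mul_pow, ← sq_abs (μ i - E)]
    gcongr
    exact hdist i
  exact (pow_le_pow_iff_left₀ (by positivity) (norm_nonneg _) two_ne_zero).1 hsq

theorem norm_inverse_sub_smul_one_le [Nontrivial F] (hH : IsSelfAdjoint H) {E : ℝ}
    (hE : E ∉ spectrum ℝ H) :
    ‖Ring.inverse (H - E • 1)‖ ≤ (Metric.infDist E (spectrum ℝ H))⁻¹ := by
  have hd : 0 < Metric.infDist E (spectrum ℝ H) :=
    ((spectrum.isClosed H).notMem_iff_infDist_pos hH.spectrum_real_nonempty).1 hE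
  refine ContinuousLinearMap.opNorm_le_bound _ (by positivity) fun y => ?_
  rw [le_inv_mul_iff₀ hd]
  have hy : (H - E • 1) (Ring.inverse (H - E • 1) y) = y :=
    DFunLike.congr_fun (Ring.mul_inverse_cancel _ (isUnit_sub_smul_one_of_notMem_spectrum hE)) y
  simpa [hy] using hH.infDist_spectrum_mul_norm_le E (Ring.inverse (H - E • 1) y)

theorem log_abs_det_sub_smul_one_sub_le (H₁ : F →L[ℝ] F) {H₂ : F →L[ℝ] F}
    (h₂ : IsSelfAdjoint H₂) {E : ℝ} (hE₁ : E ∉ spectrum ℝ H₁) (hE₂ : E ∉ spectrum ℝ H₂) :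
    log |((H₁ - E • 1 : F →L[ℝ] F) : F →ₗ[ℝ] F).det| -
        log |((H₂ - E • 1 : F →L[ℝ] F) : F →ₗ[ℝ] F).det| ≤
      finrank ℝ (LinearMap.range ((H₁ - H₂ : F →L[ℝ] F) : F →ₗ[ℝ] F)) *
        (log⁺ (|E| + ‖H₁‖) + log⁺ (Metric.infDist E (spectrum ℝ H₂))⁻¹) := by
  set r := finrank ℝ (LinearMap.range ((H₁ - H₂ : F →L[ℝ] F) : F →ₗ[ℝ] F))
  set D₁ : F →ₗ[ℝ] F := ((H₁ - E • 1 : F →L[ℝ] F) : F →ₗ[ℝ] F)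
  set D₂ : F →ₗ[ℝ] F := ((H₂ - E • 1 : F →L[ℝ] F) : F →ₗ[ℝ] F)
  rcases subsingleton_or_nontrivial F with hF | hF
  · rw [Subsingleton.elim D₁ D₂, sub_self]
    exact mul_nonneg r.cast_nonneg (add_nonneg posLog_nonneg posLog_nonneg)
  set C := (|E| + ‖H₁‖) * (Metric.infDist E (spectrum ℝ H₂))⁻¹
  have hnorm : ‖H₁ - E • 1‖ * ‖Ring.inverse (H₂ - E • 1)‖ ≤ C := by
    refine mul_le_mul ?_ (h₂.norm_inverse_sub_smul_one_le hE₂) (norm_nonneg _) (by positivity)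
    simpa [norm_smul, add_comm] using norm_sub_le H₁ (E • 1)
  have hdet : |D₁.det| ≤ |D₂.det| * C ^ r := by
    have h := ContinuousLinearMap.abs_det_le_abs_det_mul_pow_finrank_range_sub (H₁ - E • 1) _
      (isUnit_sub_smul_one_of_notMem_spectrum hE₂)
    rw [sub_sub_sub_cancel_right] at h
    exact h.trans (by gcongr)
  have hD₁ : 0 < |D₁.det| := abs_pos.2 (ContinuousLinearMap.det_sub_smul_one_ne_zero hE₁)
  have hD₂ : 0 < |D₂.det| := abs_pos.2 (ContinuousLinearMap.det_sub_smul_one_ne_zero hE₂)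
  have hCr : 0 < C ^ r := pos_of_mul_pos_right (hD₁.trans_le hdet) hD₂.le
  have hlogC : log C ≤ log⁺ (|E| + ‖H₁‖) + log⁺ (Metric.infDist E (spectrum ℝ H₂))⁻¹ :=
    (le_max_right _ _).trans posLog_mul
  calc log |D₁.det| - log |D₂.det| ≤ log (|D₂.det| * C ^ r) - log |D₂.det| := by
        gcongr
    _ = r * log C := by rw [log_mul hD₂.ne' hCr.ne', log_pow, add_sub_cancel_left]
    _ ≤ _ := by gcongr

end IsSelfAdjoint

theorem stmt_7_general (n : ℕ)
    (H₁ H₂ : EuclideanSpace ℝ (Fin n) →L[ℝ] EuclideanSpace ℝ (Fin n))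
    (h₂ : IsSelfAdjoint H₂) (E : ℝ)
    (hE₁ : E ∉ spectrum ℝ H₁) (hE₂ : E ∉ spectrum ℝ H₂) :
    Real.log (abs (LinearMap.det ((H₁ - E • 1 :
        EuclideanSpace ℝ (Fin n) →L[ℝ] EuclideanSpace ℝ (Fin n)) :
        EuclideanSpace ℝ (Fin n) →ₗ[ℝ] EuclideanSpace ℝ (Fin n)))) -
      Real.log (abs (LinearMap.det ((H₂ - E • 1 :
        EuclideanSpace ℝ (Fin n) →L[ℝ] EuclideanSpace ℝ (Fin n)) :
        EuclideanSpace ℝ (Fin n) →ₗ[ℝ] EuclideanSpace ℝ (Fin n)))) ≤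
    4 * (Module.finrank ℝ (LinearMap.range ((H₁ - H₂ :
        EuclideanSpace ℝ (Fin n) →L[ℝ] EuclideanSpace ℝ (Fin n)) :
        EuclideanSpace ℝ (Fin n) →ₗ[ℝ] EuclideanSpace ℝ (Fin n)))) *
      max (max (Real.log (|E| + ‖H₁‖)) 0)
        (max (-Real.log (Metric.infDist E (spectrum ℝ H₂))) 0) := by
  refine (h₂.log_abs_det_sub_smul_one_sub_le H₁ hE₁ hE₂).trans ?_
  set M := max (max (log (|E| + ‖H₁‖)) 0) (max (-log (Metric.infDist E (spectrum ℝ H₂))) 0)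
  have ha : log⁺ (|E| + ‖H₁‖) ≤ M := by
    rw [posLog_apply, max_comm]
    exact le_max_left _ _
  have hd : log⁺ (Metric.infDist E (spectrum ℝ H₂))⁻¹ ≤ M := by
    rw [posLog_apply, log_inv, max_comm]
    exact le_max_right _ _
  have hM : 0 ≤ M := posLog_nonneg.trans ha
  have key : ∀ t : ℝ, 0 ≤ t →
      t * (log⁺ (|E| + ‖H₁‖) + log⁺ (Metric.infDist E (spectrum ℝ H₂))⁻¹) ≤ 4 * t * M :=
    fun t ht => by nlinarith [mul_le_mul_of_nonneg_left (add_le_add ha hd) ht, mul_nonneg ht hM]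
  exact key _ (Nat.cast_nonneg _)

theorem stmt_7 (n : ℕ)
    (H₁ H₂ : EuclideanSpace ℝ (Fin n) →L[ℝ] EuclideanSpace ℝ (Fin n))
    (h₁ : IsSelfAdjoint H₁) (h₂ : IsSelfAdjoint H₂) (E : ℝ)
    (hE₁ : E ∉ spectrum ℝ H₁) (hE₂ : E ∉ spectrum ℝ H₂) :
    Real.log (abs (LinearMap.det ((H₁ - E • 1 :
        EuclideanSpace ℝ (Fin n) →L[ℝ] EuclideanSpace ℝ (Fin n)) :
        EuclideanSpace ℝ (Fin n) →ₗ[ℝ] EuclideanSpace ℝ (Fin n)))) -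
      Real.log (abs (LinearMap.det ((H₂ - E • 1 :
        EuclideanSpace ℝ (Fin n) →L[ℝ] EuclideanSpace ℝ (Fin n)) :
        EuclideanSpace ℝ (Fin n) →ₗ[ℝ] EuclideanSpace ℝ (Fin n)))) ≤
    4 * (Module.finrank ℝ (LinearMap.range ((H₁ - H₂ :
        EuclideanSpace ℝ (Fin n) →L[ℝ] EuclideanSpace ℝ (Fin n)) :
        EuclideanSpace ℝ (Fin n) →ₗ[ℝ] EuclideanSpace ℝ (Fin n)))) *
      max (max (Real.log (|E| + ‖H₁‖)) 0)
        (max (-Real.log (Metric.infDist E (spectrum ℝ H₂))) 0) :=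
  stmt_7_general n H₁ H₂ h₂ E hE₁ hE₂
end

section
/- Let A, B be self-adjoint operators on an N-dimensional inner product space with r = rank(A − B), and let E₁^A ≤ … ≤ E_N^A and E₁^B ≤ … ≤ E_N^B be their eigenvalues in increasing order. Then E_j^A ≤ E_{j+r}^B for all 1 ≤ j ≤ N − r, and E_{j−r}^B ≤ E_j^A for all r + 1 ≤ j ≤ N. -/
/-!
Let `a₁ ≤ … ≤ a_N` and `b₁ ≤ … ≤ b_N` be the eigenvalues of `A` and `B`, and `k = j + r`. A vector
`x` in the span of the eigenvectors of `A` for `a_j, …, a_N`, in the span of the eigenvectors of `B`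
for `b₁, …, b_k`, and in `ker (A - B)` satisfies `a_j ‖x‖² ≤ ⟪x, A x⟫ = ⟪x, B x⟫ ≤ b_k ‖x‖²`. The
three subspaces have dimensions `N - j + 1`, `k` and `N - r`, which add up to more than `2 N`, so
they share a nonzero vector. Exchanging `A` and `B` gives the other inequality.
-/

open Finset Module Submodule
open scoped RealInnerProductSpace

section FiniteDimensional

variable {K V : Type*} [DivisionRing K] [AddCommGroup V] [Module K V] [FiniteDimensional K V]

theorem Submodule.finrank_add_finrank_le_finrank_inf_add (s t : Submodule K V) :
    finrank K s + finrank K t ≤ finrank K ↥(s ⊓ t) + finrank K V := by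
  rw [← finrank_sup_add_finrank_inf_eq]
  have := (s ⊔ t).finrank_le
  omega

theorem Submodule.exists_mem_inf_inf_ne_zero_of_finrank_lt (s t u : Submodule K V)
    (h : 2 * finrank K V < finrank K s + finrank K t + finrank K u) :
    ∃ x ∈ s ⊓ t ⊓ u, x ≠ 0 := by
  have := s.finrank_add_finrank_le_finrank_inf_add t
  have := (s ⊓ t).finrank_add_finrank_le_finrank_inf_add u
  refine exists_mem_ne_zero_of_ne_bot fun hbot => ?_
  rw [hbot, finrank_bot] at this
  omega

end FiniteDimensional

section InnerProductSpace

variable {E : Type*} [NormedAddCommGroup E] [InnerProductSpace ℝ E]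

theorem Orthonormal.mul_norm_sq_le_inner_of_mem_span {ι : Type*} [Fintype ι] {v : ι → E}
    (hv : Orthonormal ℝ v) {T : E →ₗ[ℝ] E} {μ : ι → ℝ} (hT : ∀ i, T (v i) = μ i • v i)
    {c : ℝ} (hc : ∀ i, c ≤ μ i) {x : E} (hx : x ∈ span ℝ (Set.range v)) :
    c * ‖x‖ ^ 2 ≤ ⟪x, T x⟫ := by
  obtain ⟨d, rfl⟩ := (mem_span_range_iff_exists_fun ℝ).mp hx
  have hTx : T (∑ i, d i • v i) = ∑ i, (μ i * d i) • v i := by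
    simp only [map_sum, map_smul, hT, smul_smul, mul_comm]
  rw [hTx, ← real_inner_self_eq_norm_sq, hv.inner_sum, hv.inner_sum, Finset.mul_sum]
  refine sum_le_sum fun i _ => ?_
  simpa only [conj_trivial, mul_left_comm _ (μ i), mul_assoc] using
    mul_le_mul_of_nonneg_right (hc i) (mul_self_nonneg (d i))

theorem Orthonormal.inner_le_mul_norm_sq_of_mem_span {ι : Type*} [Fintype ι] {v : ι → E}
    (hv : Orthonormal ℝ v) {T : E →ₗ[ℝ] E} {μ : ι → ℝ} (hT : ∀ i, T (v i) = μ i • v i)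
    {c : ℝ} (hc : ∀ i, μ i ≤ c) {x : E} (hx : x ∈ span ℝ (Set.range v)) :
    ⟪x, T x⟫ ≤ c * ‖x‖ ^ 2 := by
  have := hv.mul_norm_sq_le_inner_of_mem_span (T := -T) (μ := -μ) (by simp [hT])
    (fun i => neg_le_neg (hc i)) hx
  simp only [LinearMap.neg_apply, inner_neg_right] at this
  linarith

theorem le_of_inner_bounds_of_finrank_lt [FiniteDimensional ℝ E] {T S : E →ₗ[ℝ] E}
    {U V W : Submodule ℝ E} {α β : ℝ}
    (hU : ∀ x ∈ U, α * ‖x‖ ^ 2 ≤ ⟪x, T x⟫) (hV : ∀ x ∈ V, ⟪x, S x⟫ ≤ β * ‖x‖ ^ 2)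
    (hW : ∀ x ∈ W, T x = S x)
    (hdim : 2 * finrank ℝ E < finrank ℝ U + finrank ℝ V + finrank ℝ W) : α ≤ β := by
  obtain ⟨x, ⟨⟨hxU, hxV⟩, hxW⟩, hx0⟩ := exists_mem_inf_inf_ne_zero_of_finrank_lt U V W hdim
  refine le_of_mul_le_mul_right ?_ (by positivity : 0 < ‖x‖ ^ 2)
  calc α * ‖x‖ ^ 2 ≤ ⟪x, T x⟫ := hU x hxU
    _ = ⟪x, S x⟫ := by rw [hW x hxW]
    _ ≤ β * ‖x‖ ^ 2 := hV x hxV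

end InnerProductSpace

namespace Matrix

theorem rank_neg {m n R : Type*} [Fintype n] [CommRing R] (M : Matrix m n R) :
    (-M).rank = M.rank := by
  have : (-M).mulVecLin = -M.mulVecLin := by ext; simp
  rw [rank, rank, this, LinearMap.range_neg]

variable {n : Type*} [Fintype n] [DecidableEq n]

theorem finrank_ker_toEuclideanLin_add_rank {𝕜 : Type*} [RCLike 𝕜] (M : Matrix n n 𝕜) :
    finrank 𝕜 (LinearMap.ker (toEuclideanLin M)) + M.rank = Fintype.card n := by
  rw [rank_eq_finrank_range_toLin M (PiLp.basisFun 2 𝕜 n) (PiLp.basisFun 2 𝕜 n), ← toLpLin_eq_toLin,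
    add_comm, LinearMap.finrank_range_add_finrank_ker, finrank_euclideanSpace]

namespace IsHermitian

section

variable {A : Matrix n n ℝ} (hA : A.IsHermitian)

def eigenvectorSpan (s : Finset n) : Submodule ℝ (EuclideanSpace ℝ n) :=
  span ℝ (Set.range (hA.eigenvectorBasis ∘ ((↑) : s → n)))

theorem toEuclideanLin_eigenvectorBasis (i : n) :
    toEuclideanLin A (hA.eigenvectorBasis i) = hA.eigenvalues i • hA.eigenvectorBasis i :=
  congrArg (WithLp.toLp 2) (hA.mulVec_eigenvectorBasis i)

theorem finrank_eigenvectorSpan (s : Finset n) : finrank ℝ (hA.eigenvectorSpan s) = #s := by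
  rw [eigenvectorSpan, finrank_span_eq_card
    (hA.eigenvectorBasis.orthonormal.comp _ Subtype.val_injective).linearIndependent,
    Fintype.card_coe]

theorem mul_norm_sq_le_inner_of_mem_eigenvectorSpan {s : Finset n} {c : ℝ}
    (hc : ∀ i ∈ s, c ≤ hA.eigenvalues i) {x : EuclideanSpace ℝ n} (hx : x ∈ hA.eigenvectorSpan s) :
    c * ‖x‖ ^ 2 ≤ ⟪x, toEuclideanLin A x⟫ :=
  (hA.eigenvectorBasis.orthonormal.comp _ Subtype.val_injective).mul_norm_sq_le_inner_of_mem_span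
    (fun i => hA.toEuclideanLin_eigenvectorBasis i) (fun i => hc i i.2) hx

theorem inner_le_mul_norm_sq_of_mem_eigenvectorSpan {s : Finset n} {c : ℝ}
    (hc : ∀ i ∈ s, hA.eigenvalues i ≤ c) {x : EuclideanSpace ℝ n} (hx : x ∈ hA.eigenvectorSpan s) :
    ⟪x, toEuclideanLin A x⟫ ≤ c * ‖x‖ ^ 2 :=
  (hA.eigenvectorBasis.orthonormal.comp _ Subtype.val_injective).inner_le_mul_norm_sq_of_mem_span
    (fun i => hA.toEuclideanLin_eigenvectorBasis i) (fun i => hc i i.2) hx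

end

theorem le_of_add_rank_sub_eq {N : ℕ} {A B : Matrix (Fin N) (Fin N) ℝ}
    (hA : A.IsHermitian) (hB : B.IsHermitian) {a b : Fin N → ℝ} (ha : Monotone a)
    (hb : Monotone b) (haA : ∃ σ : Equiv.Perm (Fin N), a = hA.eigenvalues ∘ σ)
    (hbB : ∃ σ : Equiv.Perm (Fin N), b = hB.eigenvalues ∘ σ) {j k : Fin N}
    (hjk : (j : ℕ) + (A - B).rank = k) : a j ≤ b k := by
  obtain ⟨σ, rfl⟩ := haA
  obtain ⟨τ, rfl⟩ := hbB
  refine le_of_inner_bounds_of_finrank_lt (T := toEuclideanLin A) (S := toEuclideanLin B)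
    (W := LinearMap.ker (toEuclideanLin (A - B)))
    (fun _ => hA.mul_norm_sq_le_inner_of_mem_eigenvectorSpan (s := (Ici j).map σ.toEmbedding) ?_)
    (fun _ => hB.inner_le_mul_norm_sq_of_mem_eigenvectorSpan (s := (Iic k).map τ.toEmbedding) ?_)
    (fun x hx => by simpa [sub_eq_zero] using hx) ?_
  · exact forall_mem_map.2 fun i hi => ha (mem_Ici.1 hi)
  · exact forall_mem_map.2 fun i hi => hb (mem_Iic.1 hi)
  · have := finrank_ker_toEuclideanLin_add_rank (A - B)
    rw [finrank_eigenvectorSpan, finrank_eigenvectorSpan, card_map, card_map, Fin.card_Ici,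
      Fin.card_Iic, finrank_euclideanSpace_fin]
    simp only [Fintype.card_fin] at this
    omega

end IsHermitian

end Matrix

theorem stmt_8 (N : ℕ) (A B : Matrix (Fin N) (Fin N) ℝ)
    (hA : A.IsHermitian) (hB : B.IsHermitian)
    (a b : Fin N → ℝ) (ha : Monotone a) (hb : Monotone b)
    (haA : ∃ σ : Equiv.Perm (Fin N), a = hA.eigenvalues ∘ σ)
    (hbB : ∃ σ : Equiv.Perm (Fin N), b = hB.eigenvalues ∘ σ) :
    ∀ j k : Fin N, (j : ℕ) + (A - B).rank = (k : ℕ) → a j ≤ b k ∧ b j ≤ a k := by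
  intro j k hjk
  refine ⟨hA.le_of_add_rank_sub_eq hB ha hb haA hbB hjk,
    hB.le_of_add_rank_sub_eq hA hb ha hbB haA ?_⟩
  rwa [← neg_sub, Matrix.rank_neg]
end

section
/- Let M₁, …, M_N be W × W real matrices, and let A_N be the NW × NW block-tridiagonal matrix with diagonal blocks M₁, …, M_N and off-diagonal blocks −I (i.e., A_N has M_k in the k-th diagonal block position and −I in the blocks immediately above and below the diagonal). Then det A_N equals the determinant of the top-left W × W block of the product ∏_{k=N}^{1} [[M_k, −I], [I, 0]] of 2W × 2W block matrices (the product taken in order with index k decreasing from N to 1). -/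
/-!
Let `P 0 = 1`, `P 1 = M 0`, `P (k + 2) = M (k + 1) * P (k + 1) - P k` be the matrix continuants;
the product of the transfer matrices has `P N` over `P (N - 1)` as its first block column.
The block column `(P 0, …, P (N - 1))` is killed by the block-tridiagonal matrix `A` except in
the last block row, where it gives `P N`. So if `U` has this as its last block column and
`-e (j + 1)` as its `j`-th block column, `A * U` is block lower triangular with diagonal blocks
`1, …, 1, P N`. Finally `U` is a block unitriangular matrix times the signed cyclic shift
`signedRotation ⊗ₖ 1`, whose determinant is `1`.
-/

open Matrix
open scoped Kronecker

theorem Fin.sum_univ_ite_val_eq {M : Type*} [AddCommMonoid M] (N a : ℕ) (c : M) :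
    ∑ k : Fin N, (if (k : ℕ) = a then c else 0) = if a < N then c else 0 := by
  rw [Fin.sum_univ_eq_sum_range (fun k => if k = a then c else 0), Finset.sum_ite_eq']
  simp

namespace Matrix

variable {m n α R : Type*} [Fintype m] [DecidableEq m] [Fintype n] [DecidableEq n] [CommRing R]

theorem det_comp_of_blockTriangular [Fintype α] [LinearOrder α] {b : m → α}
    (hb : Function.Injective b) {M : Matrix m m (Matrix n n R)} (h : M.BlockTriangular b) :
    (comp m m n n R M).det = ∏ i, (M i i).det := by
  rw [h.comp.det_fintype]
  refine (Fintype.prod_of_injective b hb _ _ (fun a ha => ?_) (fun i => ?_)).symm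
  · have : IsEmpty {p : m × n // b p.1 = a} := ⟨fun p => ha ⟨p.1.1, p.2⟩⟩
    exact det_isEmpty
  · let e : n ≃ {p : m × n // b p.1 = b i} :=
      { toFun := fun x => ⟨(i, x), rfl⟩
        invFun := fun p => p.1.2
        left_inv := fun _ => rfl
        right_inv := fun ⟨⟨j, x⟩, hj⟩ => by obtain rfl := hb hj; rfl }
    rw [← det_reindex_self e]
    congr 1
    ext ⟨⟨j, x⟩, hj⟩ ⟨⟨k, y⟩, hk⟩
    obtain rfl := hb hj
    obtain rfl := hb hk
    rfl

theorem det_comp_map_scalar (C : Matrix m m R) :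
    (comp m m n n R (C.map (scalar n))).det = C.det ^ Fintype.card n := by
  have : comp m m n n R (C.map (scalar n)) = C ⊗ₖ (1 : Matrix n n R) := by
    ext ⟨i, x⟩ ⟨j, y⟩
    simp [one_apply, diagonal_apply]
  rw [this, det_kronecker, det_one, one_pow, mul_one]

theorem det_comp_mul (A B : Matrix m m (Matrix n n R)) :
    (comp m m n n R (A * B)).det = (comp m m n n R A).det * (comp m m n n R B).det := by
  rw [← det_mul, ← compRingEquiv_apply, map_mul]
  rfl

end Matrix

def signedRotation (R : Type*) [Ring R] (N : ℕ) : Matrix (Fin N) (Fin N) R :=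
  Matrix.of fun i j =>
    if (i : ℕ) = j + 1 then -1 else if (i : ℕ) = 0 ∧ (j : ℕ) + 1 = N then 1 else 0

theorem det_signedRotation (R : Type*) [CommRing R] (N : ℕ) : (signedRotation R N).det = 1 := by
  cases N with
  | zero => exact det_isEmpty
  | succ N =>
    have hminor : (signedRotation R (N + 1)).submatrix Fin.succ (Fin.last N).succAbove = -1 := by
      ext i j
      simp only [submatrix_apply, signedRotation, of_apply, Fin.val_succ, Fin.succAbove_last,
        Fin.val_castSucc, Nat.add_right_cancel_iff, Nat.add_one_ne_zero, false_and, if_false,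
        Fin.val_inj]
      rw [neg_apply, one_apply]
      split_ifs <;> simp
    -- Laplace expansion along the first row: only the corner entry `1` survives, with minor `-1`.
    rw [det_succ_row_zero, Fintype.sum_eq_single (Fin.last N)]
    · rw [hminor, det_neg, det_one]
      simp [signedRotation, ← pow_add, ← two_mul, pow_mul]
    · intro j hj
      have hj' : (j : ℕ) ≠ N := fun h => hj (Fin.ext h)
      simp [signedRotation, hj']

section BlockTridiagonal

variable {n R : Type*} [Fintype n] [DecidableEq n] [CommRing R]

def continuant (M : ℕ → Matrix n n R) : ℕ → Matrix n n R
  | 0 => 1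
  | 1 => M 0
  | k + 2 => M (k + 1) * continuant M (k + 1) - continuant M k

def transferProduct (M : ℕ → Matrix n n R) (N : ℕ) : Matrix (n ⊕ n) (n ⊕ n) R :=
  (List.ofFn fun k : Fin N => fromBlocks (M k) (-1) 1 0).reverse.prod

theorem transferProduct_succ (M : ℕ → Matrix n n R) (N : ℕ) :
    transferProduct M (N + 1) = fromBlocks (M N) (-1) 1 0 * transferProduct M N := by
  rw [transferProduct, List.ofFn_succ', List.concat_eq_append, List.reverse_append]
  simp [transferProduct]

theorem toBlocks_transferProduct_succ (M : ℕ → Matrix n n R) (N : ℕ) :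
    (transferProduct M (N + 1)).toBlocks₁₁ = continuant M (N + 1) ∧
      (transferProduct M (N + 1)).toBlocks₂₁ = continuant M N := by
  induction N with
  | zero => simp [transferProduct, continuant]
  | succ N ih =>
    rw [transferProduct_succ, ← fromBlocks_toBlocks (transferProduct M (N + 1)), ih.1, ih.2,
      fromBlocks_multiply]
    simp [continuant, sub_eq_add_neg]

theorem toBlocks₁₁_transferProduct (M : ℕ → Matrix n n R) (N : ℕ) :
    (transferProduct M N).toBlocks₁₁ = continuant M N := by
  cases N with
  | zero => simp [transferProduct, continuant, ← fromBlocks_one]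
  | succ N => exact (toBlocks_transferProduct_succ M N).1

def blockTridiagonal (M : ℕ → Matrix n n R) (N : ℕ) : Matrix (Fin N) (Fin N) (Matrix n n R) :=
  Matrix.of fun i j =>
    if (i : ℕ) = j then M i else if (i : ℕ) + 1 = j ∨ (j : ℕ) + 1 = i then -1 else 0

def continuantColumn (M : ℕ → Matrix n n R) (N : ℕ) : Matrix (Fin N) (Fin N) (Matrix n n R) :=
  Matrix.of fun i j => if (j : ℕ) = 0 then continuant M i else if i = j then 1 else 0

def continuantShift (M : ℕ → Matrix n n R) (N : ℕ) : Matrix (Fin N) (Fin N) (Matrix n n R) :=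
  Matrix.of fun i j =>
    if (j : ℕ) + 1 = N then continuant M i else if (i : ℕ) = j + 1 then -1 else 0

theorem det_comp_continuantColumn (M : ℕ → Matrix n n R) (N : ℕ) :
    (comp _ _ _ _ R (continuantColumn M N)).det = 1 := by
  have h : (continuantColumn M N).BlockTriangular OrderDual.toDual := by
    intro i j hij
    have hij : i < j := hij
    have hj : (j : ℕ) ≠ 0 := by omega
    simp [continuantColumn, hj, hij.ne]
  rw [det_comp_of_blockTriangular OrderDual.toDual.injective h]
  refine Finset.prod_eq_one fun i _ => ?_
  by_cases hi : (i : ℕ) = 0 <;> simp [continuantColumn, hi, continuant]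

theorem continuantColumn_mul_signedRotation (M : ℕ → Matrix n n R) (N : ℕ) :
    continuantColumn M N * (signedRotation R N).map (scalar n) = continuantShift M N := by
  ext1 i j
  rw [mul_apply]
  by_cases hj : (j : ℕ) + 1 = N
  · rw [Fintype.sum_eq_single ⟨0, by omega⟩]
    · simp [continuantColumn, continuantShift, signedRotation, hj, apply_ite (scalar n),
        -scalar_apply]
      omega
    · intro k hk
      have hk : (k : ℕ) ≠ 0 := fun h => hk (Fin.ext h)
      have hk' : (k : ℕ) ≠ j + 1 := by omega
      simp [signedRotation, hk, hk']
  · rw [Fintype.sum_eq_single ⟨j + 1, by omega⟩]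
    · simp [continuantColumn, continuantShift, signedRotation, hj, Fin.ext_iff, -scalar_apply]
      split_ifs <;> simp
    · intro k hk
      have hk : (k : ℕ) ≠ j + 1 := fun h => hk (Fin.ext h)
      simp [signedRotation, hk, hj]

theorem det_comp_continuantShift (M : ℕ → Matrix n n R) (N : ℕ) :
    (comp _ _ _ _ R (continuantShift M N)).det = 1 := by
  rw [← continuantColumn_mul_signedRotation, det_comp_mul, det_comp_continuantColumn,
    det_comp_map_scalar, det_signedRotation, one_pow, one_mul]

theorem sum_blockTridiagonal_mul_continuant (M : ℕ → Matrix n n R) (N : ℕ) (i : Fin N) :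
    ∑ k, blockTridiagonal M N i k * continuant M k =
      if (i : ℕ) + 1 = N then continuant M N else 0 := by
  obtain ⟨i, hi⟩ := i
  have hsplit : ∀ k : Fin N, blockTridiagonal M N ⟨i, hi⟩ k * continuant M k =
      (if (k : ℕ) = i then M i * continuant M i else 0) -
        (if (k : ℕ) = i + 1 then continuant M (i + 1) else 0) -
        (if (k : ℕ) + 1 = i then continuant M (i - 1) else 0) := by
    rintro ⟨k, hk⟩
    obtain rfl | rfl | rfl | ⟨h₁, h₂, h₃⟩ :
        k = i ∨ k = i + 1 ∨ k + 1 = i ∨ (k ≠ i ∧ k ≠ i + 1 ∧ k + 1 ≠ i) := by omega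
    all_goals simp only [blockTridiagonal, of_apply]
    all_goals split_ifs <;> first | omega | simp_all
  simp only [hsplit, Finset.sum_sub_distrib, Fin.sum_univ_ite_val_eq]
  rcases i with _ | i
  · simp only [Nat.add_one_ne_zero, if_false, Finset.sum_const_zero, sub_zero, if_pos hi]
    by_cases hN : 1 < N
    · have hN' : 1 ≠ N := by omega
      simp [continuant, hN, hN']
    · simp [continuant, show N = 1 by omega]
  · simp only [Nat.add_right_cancel_iff, Fin.sum_univ_ite_val_eq, if_pos hi,
      if_pos (by omega : i < N), Nat.add_sub_cancel]
    by_cases hN : i + 2 < N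
    · have hN' : i + 1 + 1 ≠ N := by omega
      simp [continuant, hN, hN']
    · simp [continuant, show N = i + 2 by omega]

theorem blockTridiagonal_mul_continuantShift_apply (M : ℕ → Matrix n n R) (N : ℕ)
    (i j : Fin N) :
    (blockTridiagonal M N * continuantShift M N) i j =
      if (j : ℕ) + 1 = N then (if (i : ℕ) + 1 = N then continuant M N else 0)
      else if (i : ℕ) = j + 1 then -M i
      else if (i : ℕ) = j ∨ (i : ℕ) = j + 2 then 1 else 0 := by
  rw [mul_apply]
  by_cases hj : (j : ℕ) + 1 = N
  · simp only [continuantShift, of_apply, if_pos hj]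
    exact sum_blockTridiagonal_mul_continuant M N i
  · rw [Fintype.sum_eq_single ⟨j + 1, by omega⟩]
    · simp only [continuantShift, blockTridiagonal, of_apply, if_neg hj]
      split_ifs <;> first | omega | simp_all
    · intro k hk
      have hk : (k : ℕ) ≠ j + 1 := fun h => hk (Fin.ext h)
      simp [continuantShift, hj, hk]

theorem det_comp_blockTridiagonal (M : ℕ → Matrix n n R) (N : ℕ) :
    (comp _ _ _ _ R (blockTridiagonal M N)).det = (continuant M N).det := by
  have hL := blockTridiagonal_mul_continuantShift_apply M N
  have htri : (blockTridiagonal M N * continuantShift M N).BlockTriangular OrderDual.toDual := by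
    intro i j hij
    have hij : (i : ℕ) < j := hij
    rw [hL]
    split_ifs <;> first | rfl | omega
  calc (comp _ _ _ _ R (blockTridiagonal M N)).det
      = (comp _ _ _ _ R (blockTridiagonal M N * continuantShift M N)).det := by
        rw [det_comp_mul, det_comp_continuantShift, mul_one]
    _ = ∏ i : Fin N, (if (i : ℕ) + 1 = N then continuant M N else 1).det := by
        rw [det_comp_of_blockTriangular OrderDual.toDual.injective htri]
        refine Finset.prod_congr rfl fun i _ => ?_
        rw [hL]
        split_ifs <;> first | omega | rfl
    _ = (continuant M N).det := by
        cases N with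
        | zero => simp [continuant]
        | succ N =>
          rw [Fin.prod_univ_castSucc, Finset.prod_eq_one fun i _ => by simp [i.isLt.ne], one_mul]
          simp

end BlockTridiagonal

theorem stmt_9 (N W : ℕ) (M : Fin N → Matrix (Fin W) (Fin W) ℝ)
    (A : Matrix (Fin N × Fin W) (Fin N × Fin W) ℝ)
    (hA : ∀ (i j : Fin N) (x y : Fin W), A (i, x) (j, y) =
      if i = j then M i x y
      else if (i : ℕ) + 1 = (j : ℕ) ∨ (j : ℕ) + 1 = (i : ℕ) then
        (if x = y then -1 else 0)
      else 0) :
    A.det = (Matrix.toBlocks₁₁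
      ((List.ofFn fun k : Fin N =>
        (Matrix.fromBlocks (M k) (-1) 1 0 :
          Matrix (Fin W ⊕ Fin W) (Fin W ⊕ Fin W) ℝ)).reverse.prod)).det := by
  let M' : ℕ → Matrix (Fin W) (Fin W) ℝ := fun k => if h : k < N then M ⟨k, h⟩ else 0
  have hA' : A = comp _ _ _ _ ℝ (blockTridiagonal M' N) := by
    ext ⟨i, x⟩ ⟨j, y⟩
    rw [hA]
    simp only [comp_apply, blockTridiagonal, of_apply, Fin.val_inj]
    split_ifs <;> simp [M', one_apply, *]
  have hT : (List.ofFn fun k : Fin N =>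
      (fromBlocks (M k) (-1) 1 0 : Matrix (Fin W ⊕ Fin W) (Fin W ⊕ Fin W) ℝ)).reverse.prod =
      transferProduct M' N := by
    simp [transferProduct, M']
  rw [hA', hT, det_comp_blockTridiagonal, toBlocks₁₁_transferProduct]
end

section
/- For every W ≥ 1 there exists a basis {u_α} of ∧^W ℝ^{2W}, indexed by the W-element subsets α of {1, …, 2W}, consisting of decomposable vectors u_α = u_{α,1} ∧ … ∧ u_{α,W}, such that: (1) writing the 2W × W matrix [u_α] of the vectors u_{α,i} in block form [A_{u_α}; B_{u_α}] with W × W blocks, one has A_{u_α} = I and ‖B_{u_α}‖ ≤ 1; and (2) every standard basis vector e_β = ∧_{i∈β} e_i of ∧^W ℝ^{2W} is a linear combination of the u_α with all coefficients of absolute value at most 1. -/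
/-!
For an `m`-subset `α` of `Fin (m + n)`, the increasing bijection `φ_α` from the lower indices
missing from `α` onto the upper elements of `α` defines the vectors `u_{α,j} = e_j (+ e_{φ_α j})`.
The upper block of `[u_α]` is the identity and the lower block is a partial permutation matrix,
hence a contraction.

For the expansion of `e_β`, enumerate `β` as `e_{ρ j}` with `ρ = φ_β` on the gaps of `β` and
`ρ j = j` elsewhere; this changes `e_β` only by a sign. Writing `e_{φ j} = (e_j + e_{φ j}) - e_j`
and expanding multilinearly gives a signed sum over subsets `s` of the gaps of wedges which are
exactly the `u_α` for `α = {j < m | j ∉ s} ∪ φ_β(s)`: the restriction of an increasing matching is the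
increasing matching of the restricted sets. Distinct `s` give distinct `α`, so every coefficient is
`0` or `±1`. Consequently the `u_α` span `⋀^m`, and being `(m + n).choose m` many, form a basis.
-/

open Finset Function

theorem MultilinearMap.map_piecewise_sub {R ι M N : Type*} [CommRing R] [AddCommGroup M]
    [Module R M] [AddCommGroup N] [Module R N] [DecidableEq ι]
    (f : MultilinearMap R (fun _ : ι => M) N) (a b : ι → M) (t : Finset ι) :
    f (t.piecewise (a - b) b) =
      ∑ s ∈ t.powerset, (-1 : R) ^ (t \ s).card • f (s.piecewise a b) := by
  have h := f.map_piecewise_add a (t.piecewise (-b) b) t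
  rw [show t.piecewise (a + t.piecewise (-b) b) (t.piecewise (-b) b) = t.piecewise (a - b) b by
    ext i; by_cases hi : i ∈ t <;> simp [hi, sub_eq_add_neg]] at h
  rw [h]
  refine sum_congr rfl fun s hs => ?_
  rw [← prod_const, ← f.map_piecewise_smul]
  congr 1
  ext i
  have hst := mem_powerset.mp hs
  by_cases hi : i ∈ s
  · simp [hi, hst hi]
  · by_cases hit : i ∈ t <;> simp [hi, hit]

theorem AlternatingMap.exists_perm_map_comp_eq_sign_smul {R M N ι : Type*} [CommRing R]
    [AddCommGroup M] [Module R M] [AddCommGroup N] [Module R N] {k : ℕ}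
    (f : M [⋀^Fin k]→ₗ[R] N) (v : ι → M) {r r' : Fin k → ι} (hr : Injective r)
    (hr' : Injective r') (h : Set.range r = Set.range r') :
    ∃ σ : Equiv.Perm (Fin k), f (v ∘ r) = Equiv.Perm.sign σ • f (v ∘ r') := by
  let σ : Equiv.Perm (Fin k) :=
    (Equiv.ofInjective r hr).trans ((Equiv.setCongr h).trans (Equiv.ofInjective r' hr').symm)
  have hσ : r = r' ∘ σ := by
    ext x
    simp [σ, Equiv.apply_ofInjective_symm]
  exact ⟨σ, by rw [hσ, ← comp_assoc, f.map_perm]⟩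

theorem exists_abs_le_one_sum_eq_sum_smul {ι κ V : Type*} [Fintype κ] [DecidableEq κ]
    [AddCommGroup V] [Module ℝ V] {A : ι → κ} {s : Finset ι} (hA : Set.InjOn A s)
    {ε : ι → ℝ} (hε : ∀ i ∈ s, |ε i| ≤ 1) (y : κ → V) :
    ∃ c : κ → ℝ, (∀ k, |c k| ≤ 1) ∧ ∑ i ∈ s, ε i • y (A i) = ∑ k, c k • y k := by
  refine ⟨fun k => ∑ i ∈ s with A i = k, ε i, fun k => ?_, ?_⟩
  · have hcard : #{i ∈ s | A i = k} ≤ 1 := card_le_one.mpr fun i hi j hj => by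
      simp only [mem_filter] at hi hj
      exact hA hi.1 hj.1 (hi.2.trans hj.2.symm)
    calc |∑ i ∈ s with A i = k, ε i| ≤ ∑ i ∈ s with A i = k, |ε i| := abs_sum_le_sum_abs _ _
      _ ≤ ∑ i ∈ s with A i = k, 1 := sum_le_sum fun i hi => hε i (mem_filter.mp hi).1
      _ ≤ 1 := by simpa using hcard
  · simp_rw [sum_smul]
    rw [← sum_fiberwise_of_maps_to (fun i _ => mem_univ (A i))]
    refine sum_congr rfl fun k _ => sum_congr rfl fun i hi => ?_
    rw [(mem_filter.mp hi).2]

theorem Module.Basis.exists_eq_of_forall_mem_span {ι K V : Type*} [Fintype ι] [Field K]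
    [AddCommGroup V] [Module K V] (e : Module.Basis ι K V) {u : ι → V}
    (hu : ∀ i, e i ∈ Submodule.span K (Set.range u)) : ∃ b : Module.Basis ι K V, ⇑b = u := by
  have : Module.Finite K V := Module.Finite.of_basis e
  refine ⟨basisOfTopLeSpanOfCardEqFinrank u ?_ (Module.finrank_eq_card_basis e).symm,
    coe_basisOfTopLeSpanOfCardEqFinrank _ _ _⟩
  rw [← e.span_eq, Submodule.span_le]
  rintro _ ⟨i, rfl⟩
  exact hu i

theorem Function.Injective.sum_ite_eq_le_one {ι κ : Type*} [Fintype ι] [DecidableEq κ]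
    {g : ι → κ} (hg : Injective g) (k : κ) : ∑ i, (if g i = k then (1 : ℝ) else 0) ≤ 1 := by
  rw [sum_boole, Nat.cast_le_one, card_le_one]
  intro i hi i' hi'
  rw [mem_filter] at hi hi'
  exact hg (hi.2.trans hi'.2.symm)

open Matrix in
theorem Matrix.norm_toEuclideanLin_le_one_of_sum_le_one {ι κ : Type*} [Fintype ι] [Fintype κ]
    [DecidableEq κ] {A : Matrix ι κ ℝ} (hA : ∀ i j, 0 ≤ A i j) (hrow : ∀ i, ∑ j, A i j ≤ 1)
    (hcol : ∀ j, ∑ i, A i j ≤ 1) :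
    ‖LinearMap.toContinuousLinearMap (toEuclideanLin A)‖ ≤ 1 := by
  refine ContinuousLinearMap.opNorm_le_bound _ zero_le_one fun x => ?_
  rw [one_mul, LinearMap.coe_toContinuousLinearMap', EuclideanSpace.norm_eq,
    EuclideanSpace.norm_eq]
  refine Real.sqrt_le_sqrt ?_
  have hrow_sq : ∀ i, (∑ j, A i j * x j) ^ 2 ≤ ∑ j, A i j * x j ^ 2 := fun i =>
    calc (∑ j, A i j * x j) ^ 2 ≤ (∑ j, A i j) * ∑ j, A i j * x j ^ 2 :=
          sum_sq_le_sum_mul_sum_of_sq_le_mul _ (fun j _ => hA i j)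
            (fun j _ => mul_nonneg (hA i j) (sq_nonneg _)) (fun j _ => le_of_eq (by ring))
      _ ≤ ∑ j, A i j * x j ^ 2 :=
          mul_le_of_le_one_left (sum_nonneg fun j _ => mul_nonneg (hA i j) (sq_nonneg _)) (hrow i)
  calc ∑ i, ‖toEuclideanLin A x i‖ ^ 2 = ∑ i, (∑ j, A i j * x j) ^ 2 := by
        simp [toLpLin_apply, mulVec, dotProduct]
    _ ≤ ∑ i, ∑ j, A i j * x j ^ 2 := sum_le_sum fun i _ => hrow_sq i
    _ = ∑ j, (∑ i, A i j) * x j ^ 2 := by rw [sum_comm]; simp_rw [sum_mul]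
    _ ≤ ∑ j, ‖x j‖ ^ 2 := sum_le_sum fun j _ => by
        rw [Real.norm_eq_abs, sq_abs]
        exact mul_le_of_le_one_left (sq_nonneg _) (hcol j)

namespace Finset

variable {α β : Type*} [LinearOrder α] [LinearOrder β]

noncomputable def orderMatch (S : Finset α) (T : Finset β) (h : T.card = S.card) (g : α → β)
    (x : α) : β :=
  if hx : x ∈ S then T.orderEmbOfFin h ((S.orderIsoOfFin rfl).symm ⟨x, hx⟩) else g x

variable {S : Finset α} {T : Finset β} {h : T.card = S.card} {g : α → β} {x : α}

theorem orderMatch_of_notMem (hx : x ∉ S) : S.orderMatch T h g x = g x := dif_neg hx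

theorem orderMatch_mem (hx : x ∈ S) : S.orderMatch T h g x ∈ T := by
  rw [orderMatch, dif_pos hx]
  exact orderEmbOfFin_mem _ _ _

theorem strictMonoOn_orderMatch : StrictMonoOn (S.orderMatch T h g) S := by
  intro x hx y hy hxy
  rw [mem_coe] at hx hy
  rw [orderMatch, dif_pos hx, orderMatch, dif_pos hy]
  exact (T.orderEmbOfFin h).strictMono ((S.orderIsoOfFin rfl).symm.strictMono hxy)

theorem image_orderMatch [DecidableEq β] : S.image (S.orderMatch T h g) = T :=
  eq_of_subset_of_card_le (image_subset_iff.mpr fun _ hx => orderMatch_mem hx) <| by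
    rw [card_image_of_injOn strictMonoOn_orderMatch.injOn, h]

theorem injective_orderMatch (hg : Set.InjOn g (↑S)ᶜ) (hgT : ∀ x ∉ S, g x ∉ T) :
    Injective (S.orderMatch T h g) := by
  intro x y hxy
  by_cases hx : x ∈ S <;> by_cases hy : y ∈ S
  · exact strictMonoOn_orderMatch.injOn hx hy hxy
  · rw [orderMatch_of_notMem hy] at hxy
    exact absurd (hxy ▸ orderMatch_mem hx) (hgT y hy)
  · rw [orderMatch_of_notMem hx] at hxy
    exact absurd (hxy ▸ orderMatch_mem hy) (hgT x hx)
  · rw [orderMatch_of_notMem hx, orderMatch_of_notMem hy] at hxy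
    exact hg hx hy hxy

theorem eqOn_of_strictMonoOn_of_image_eq [DecidableEq β] {s : Finset α} {f f' : α → β}
    (hf : StrictMonoOn f s) (hf' : StrictMonoOn f' s) (h : s.image f = s.image f') :
    Set.EqOn f f' s := by
  set e := s.orderEmbOfFin rfl
  have he : ∀ i, e i ∈ s := s.orderEmbOfFin_mem rfl
  have hfe : StrictMono (f ∘ e) := fun i j hij => hf (he i) (he j) (e.strictMono hij)
  have hfe' : StrictMono (f' ∘ e) := fun i j hij => hf' (he i) (he j) (e.strictMono hij)
  have hrange : Set.range (f ∘ e) = Set.range (f' ∘ e) := by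
    rw [Set.range_comp, Set.range_comp, range_orderEmbOfFin, ← coe_image, ← coe_image, h]
  intro x hx
  obtain ⟨i, rfl⟩ : x ∈ Set.range e := by rwa [range_orderEmbOfFin]
  exact congrFun ((hfe.range_inj hfe').mp hrange) i

theorem eqOn_orderMatch_of_subset [DecidableEq β] {s : Finset α} {t : Finset β}
    {h' : t.card = s.card} (g' : α → β) (hs : s ⊆ S) (ht : t = s.image (S.orderMatch T h g)) :
    Set.EqOn (s.orderMatch t h' g') (S.orderMatch T h g) s :=
  eqOn_of_strictMonoOn_of_image_eq strictMonoOn_orderMatch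
    (strictMonoOn_orderMatch.mono (coe_subset.mpr hs)) (by rw [image_orderMatch, ht])

end Finset

namespace WedgeFrame

variable {m n : ℕ}

def lowerGaps (α : Finset (Fin (m + n))) : Finset (Fin m) := {j | Fin.castAdd n j ∉ α}

def upperPart (α : Finset (Fin (m + n))) : Finset (Fin (m + n)) := {x ∈ α | m ≤ (x : ℕ)}

def assemble (s : Finset (Fin m)) (t : Finset (Fin (m + n))) : Finset (Fin (m + n)) :=
  sᶜ.map (Fin.castAddEmb n) ∪ t

theorem mem_lowerGaps {α : Finset (Fin (m + n))} {j : Fin m} :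
    j ∈ lowerGaps α ↔ Fin.castAdd n j ∉ α := by
  simp [lowerGaps]

theorem mem_upperPart {α : Finset (Fin (m + n))} {x : Fin (m + n)} :
    x ∈ upperPart α ↔ x ∈ α ∧ m ≤ (x : ℕ) := mem_filter

theorem filter_lt_eq_map (α : Finset (Fin (m + n))) :
    α.filter (fun x : Fin (m + n) => (x : ℕ) < m) =
      (univ.filter fun j => Fin.castAdd n j ∈ α).map (Fin.castAddEmb n) := by
  ext x
  simp only [mem_filter, mem_map, mem_univ, true_and, Fin.castAddEmb_apply]
  constructor
  · rintro ⟨hx, hlt⟩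
    exact ⟨x.castLT hlt, by rwa [Fin.castAdd_castLT], Fin.castAdd_castLT _ _ _⟩
  · rintro ⟨j, hj, rfl⟩
    exact ⟨hj, j.isLt⟩

theorem card_upperPart {α : Finset (Fin (m + n))} (hα : α.card = m) :
    (upperPart α).card = (lowerGaps α).card := by
  have hsplit := card_filter_add_card_filter_not (s := α) (fun x : Fin (m + n) => (x : ℕ) < m)
  have hlow := card_filter_add_card_filter_not (s := (univ : Finset (Fin m)))
    (fun j => Fin.castAdd n j ∈ α)
  rw [filter_lt_eq_map, card_map] at hsplit
  simp only [card_univ, Fintype.card_fin] at hlow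
  have hup : upperPart α = α.filter fun x : Fin (m + n) => ¬ (x : ℕ) < m := by
    simp only [upperPart, not_lt]
  rw [hup, lowerGaps]
  omega

theorem lowerGaps_assemble (s : Finset (Fin m)) {t : Finset (Fin (m + n))}
    (ht : ∀ x ∈ t, m ≤ (x : ℕ)) : lowerGaps (assemble s t) = s := by
  ext j
  have : Fin.castAdd n j ∉ t := fun hj => absurd (ht _ hj) (by simp)
  simp [mem_lowerGaps, assemble, this]

theorem upperPart_assemble (s : Finset (Fin m)) {t : Finset (Fin (m + n))}
    (ht : ∀ x ∈ t, m ≤ (x : ℕ)) : upperPart (assemble s t) = t := by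
  ext x
  simp only [mem_upperPart, assemble, mem_union, mem_map, Fin.castAddEmb_apply]
  constructor
  · rintro ⟨⟨j, -, rfl⟩ | hx, hm⟩
    · exact absurd hm (by simp)
    · exact hx
  · exact fun hx => ⟨Or.inr hx, ht x hx⟩

theorem card_assemble {s : Finset (Fin m)} {t : Finset (Fin (m + n))}
    (ht : ∀ j ∉ s, Fin.castAdd n j ∉ t) (hst : t.card = s.card) : (assemble s t).card = m := by
  rw [assemble, card_union_of_disjoint, card_map, card_compl, Fintype.card_fin, hst,
    Nat.sub_add_cancel (card_le_univ s |>.trans_eq (Fintype.card_fin m))]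
  rw [disjoint_left]
  rintro _ hx
  obtain ⟨j, hj, rfl⟩ := mem_map.mp hx
  exact ht j (mem_compl.mp hj)

abbrev Index (m n : ℕ) := {α : Finset (Fin (m + n)) // α.card = m}

/-- `partner α` is the paper's `φ_α` on `lowerGaps α`, extended by `Fin.castAdd`, so that it
enumerates `α`; `frame α j` below is `u_{α,j}`. -/
noncomputable def partner (α : Index m n) : Fin m → Fin (m + n) :=
  (lowerGaps α.1).orderMatch (upperPart α.1) (card_upperPart α.2) (Fin.castAdd n)

theorem injective_partner (α : Index m n) : Injective (partner α) :=
  injective_orderMatch (fun _ _ _ _ h => Fin.castAdd_injective _ _ h)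
    fun _ _ hmem => absurd (mem_upperPart.mp hmem).2 (by simp)

theorem partner_of_notMem {α : Index m n} {j : Fin m} (hj : j ∉ lowerGaps α.1) :
    partner α j = Fin.castAdd n j :=
  orderMatch_of_notMem hj

theorem partner_mem_upperPart {α : Index m n} {j : Fin m} (hj : j ∈ lowerGaps α.1) :
    partner α j ∈ upperPart α.1 :=
  orderMatch_mem hj

theorem le_partner {α : Index m n} {j : Fin m} (hj : j ∈ lowerGaps α.1) :
    m ≤ (partner α j : ℕ) :=
  (mem_upperPart.mp (partner_mem_upperPart hj)).2

theorem range_partner (α : Index m n) : Set.range (partner α) = α.1 := by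
  have hmem : ∀ j, partner α j ∈ α.1 := fun j => by
    by_cases hj : j ∈ lowerGaps α.1
    · exact (mem_upperPart.mp (partner_mem_upperPart hj)).1
    · rw [partner_of_notMem hj]
      exact not_not.mp (mt mem_lowerGaps.mpr hj)
  rw [← Set.image_univ, ← coe_univ, ← coe_image, coe_inj]
  refine eq_of_subset_of_card_le (image_subset_iff.mpr fun j _ => hmem j) ?_
  rw [card_image_of_injective _ (injective_partner α), card_univ, Fintype.card_fin, α.2]

noncomputable def frame (α : Index m n) : Fin m → Fin (m + n) → ℝ :=
  (lowerGaps α.1).piecewise (fun j => Pi.single (Fin.castAdd n j) 1 + Pi.single (partner α j) 1)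
    (fun j => Pi.single (Fin.castAdd n j) 1)

theorem frame_castAdd (α : Index m n) (i j : Fin m) :
    frame α j (Fin.castAdd n i) = if i = j then 1 else 0 := by
  by_cases hj : j ∈ lowerGaps α.1
  · have : Fin.castAdd n i ≠ partner α j := fun h => absurd (le_partner hj) (by simp [← h])
    simp [frame, hj, Pi.single_apply, this, Fin.castAdd_inj]
  · simp [frame, hj, Pi.single_apply, Fin.castAdd_inj]

theorem frame_natAdd (α : Index m n) (i : Fin n) (j : Fin m) :
    frame α j (Fin.natAdd m i) = if partner α j = Fin.natAdd m i then 1 else 0 := by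
  have hne : Fin.castAdd n j ≠ Fin.natAdd m i := fun h => by
    have := congrArg Fin.val h
    simp only [Fin.val_castAdd, Fin.val_natAdd] at this
    omega
  by_cases hj : j ∈ lowerGaps α.1
  · simp [frame, hj, Pi.single_apply, hne.symm, eq_comm]
  · simp [frame, hj, hne.symm, partner_of_notMem hj, hne]

theorem castAdd_notMem_image_partner (β : Index m n) {s : Finset (Fin m)} {j : Fin m}
    (hj : j ∉ s) : Fin.castAdd n j ∉ s.image (partner β) := by
  rw [mem_image]
  rintro ⟨k, hk, hkj⟩
  by_cases hk' : k ∈ lowerGaps β.1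
  · exact absurd (le_partner hk') (by simp [hkj])
  · rw [partner_of_notMem hk', Fin.castAdd_inj] at hkj
    exact hj (hkj ▸ hk)

noncomputable def restrict (β : Index m n) (s : Finset (Fin m)) : Index m n :=
  ⟨assemble s (s.image (partner β)), card_assemble (fun _ => castAdd_notMem_image_partner β)
    (card_image_of_injective _ (injective_partner β))⟩

theorem le_of_mem_image_partner {β : Index m n} {s : Finset (Fin m)} (hs : s ⊆ lowerGaps β.1) :
    ∀ x ∈ s.image (partner β), m ≤ (x : ℕ) := by
  simp only [mem_image, forall_exists_index, and_imp]
  rintro _ j hj rfl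
  exact le_partner (hs hj)

theorem lowerGaps_restrict {β : Index m n} {s : Finset (Fin m)} (hs : s ⊆ lowerGaps β.1) :
    lowerGaps (restrict β s).1 = s :=
  lowerGaps_assemble s (le_of_mem_image_partner hs)

theorem upperPart_restrict {β : Index m n} {s : Finset (Fin m)} (hs : s ⊆ lowerGaps β.1) :
    upperPart (restrict β s).1 = s.image (partner β) :=
  upperPart_assemble s (le_of_mem_image_partner hs)

theorem frame_restrict {β : Index m n} {s : Finset (Fin m)} (hs : s ⊆ lowerGaps β.1) :
    frame (restrict β s) = s.piecewise
      (fun j => Pi.single (Fin.castAdd n j) 1 + Pi.single (partner β j) 1)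
      (fun j => Pi.single (Fin.castAdd n j) 1) := by
  have hpartner : Set.EqOn (partner (restrict β s)) (partner β) (lowerGaps (restrict β s).1) :=
    eqOn_orderMatch_of_subset _ (by rwa [lowerGaps_restrict hs])
      (by rw [upperPart_restrict hs, lowerGaps_restrict hs]; rfl)
  rw [lowerGaps_restrict hs] at hpartner
  rw [frame, lowerGaps_restrict hs]
  exact s.piecewise_congr (fun j hj => by rw [hpartner hj]) fun _ _ => rfl

theorem injOn_restrict (β : Index m n) : Set.InjOn (restrict β) ((lowerGaps β.1).powerset) :=
  fun s hs t ht hst => by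
    rw [← lowerGaps_restrict (mem_powerset.mp hs), hst, lowerGaps_restrict (mem_powerset.mp ht)]

theorem exists_ιMulti_single_eq_sum (β : Index m n) :
    ∃ c : Index m n → ℝ, (∀ α, |c α| ≤ 1) ∧
      ExteriorAlgebra.ιMulti ℝ m (fun i => Pi.single (β.1.orderEmbOfFin β.2 i) (1 : ℝ)) =
        ∑ α, c α • ExteriorAlgebra.ιMulti ℝ m (frame α) := by
  set f := ExteriorAlgebra.ιMulti ℝ m (M := Fin (m + n) → ℝ)
  set S := lowerGaps β.1
  set a : Fin m → Fin (m + n) → ℝ :=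
    fun j => Pi.single (Fin.castAdd n j) 1 + Pi.single (partner β j) 1
  set b : Fin m → Fin (m + n) → ℝ := fun j => Pi.single (Fin.castAdd n j) 1
  obtain ⟨σ, hσ⟩ := f.exists_perm_map_comp_eq_sign_smul (fun x => Pi.single x (1 : ℝ))
    (β.1.orderEmbOfFin β.2).injective (injective_partner β)
    (by rw [range_orderEmbOfFin, range_partner])
  have hpartner : (fun j => Pi.single (partner β j) (1 : ℝ)) = S.piecewise (a - b) b := by
    ext j : 1
    by_cases hj : j ∈ S
    · simp [a, b, hj]
    · simp [b, hj, partner_of_notMem hj]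
  have hexpand := f.toMultilinearMap.map_piecewise_sub a b S
  obtain ⟨c, hc, hsum⟩ := exists_abs_le_one_sum_eq_sum_smul (injOn_restrict β)
    (ε := fun s => ((Equiv.Perm.sign σ : ℤ) : ℝ) * (-1) ^ (S \ s).card)
    (fun s _ => by
      rw [abs_mul, abs_pow, abs_neg, abs_one, one_pow, mul_one, ← Int.cast_abs,
        Equiv.Perm.sign_abs, Int.cast_one])
    (fun α => f (frame α))
  refine ⟨c, hc, ?_⟩
  calc f (fun i => Pi.single (β.1.orderEmbOfFin β.2 i) 1)
      = Equiv.Perm.sign σ • f (S.piecewise (a - b) b) := by rw [← hpartner]; exact hσ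
    _ = ∑ s ∈ S.powerset, (((Equiv.Perm.sign σ : ℤ) : ℝ) * (-1) ^ (S \ s).card) •
          f (frame (restrict β s)) := by
      rw [AlternatingMap.coe_multilinearMap] at hexpand
      rw [hexpand, Units.smul_def, ← Int.cast_smul_eq_zsmul ℝ, smul_sum]
      refine sum_congr rfl fun s hs => ?_
      rw [frame_restrict (mem_powerset.mp hs), smul_smul]
    _ = _ := hsum

theorem norm_lowerBlock_frame_le_one (α : Index m n) :
    ‖LinearMap.toContinuousLinearMap (Matrix.toEuclideanLin
      (Matrix.of fun (i : Fin n) (j : Fin m) => frame α j (Fin.natAdd m i)))‖ ≤ 1 := by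
  refine Matrix.norm_toEuclideanLin_le_one_of_sum_le_one (fun i j => ?_) (fun i => ?_) fun j => ?_
  · simp only [Matrix.of_apply, frame_natAdd]
    split_ifs <;> norm_num
  · simp only [Matrix.of_apply, frame_natAdd]
    exact (injective_partner α).sum_ite_eq_le_one _
  · simp only [Matrix.of_apply, frame_natAdd, eq_comm (a := partner α j)]
    exact (Fin.natAdd_injective _ _).sum_ite_eq_le_one _

noncomputable def standardBasis (m n : ℕ) : Module.Basis (Index m n) ℝ (⋀[ℝ]^m (Fin (m + n) → ℝ)) :=
  ((Pi.basisFun ℝ (Fin (m + n))).exteriorPower m).reindex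
    (Equiv.subtypeEquivRight fun _ => Set.powersetCard.mem_iff)

theorem coe_standardBasis_apply (β : Index m n) :
    (standardBasis m n β : ExteriorAlgebra ℝ (Fin (m + n) → ℝ)) =
      ExteriorAlgebra.ιMulti ℝ m (fun i => Pi.single (β.1.orderEmbOfFin β.2 i) (1 : ℝ)) := by
  simp only [standardBasis, Module.Basis.reindex_apply, exteriorPower.coe_basis,
    exteriorPower.ιMulti_family_apply_coe, ExteriorAlgebra.ιMulti_family]
  congr 1
  ext i : 1
  simp [Set.powersetCard.ofFinEmbEquiv_symm_apply]

theorem exists_basis_ιMulti_frame :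
    ∃ b : Module.Basis (Index m n) ℝ (⋀[ℝ]^m (Fin (m + n) → ℝ)),
      ∀ α, (b α : ExteriorAlgebra ℝ (Fin (m + n) → ℝ)) = ExteriorAlgebra.ιMulti ℝ m (frame α) := by
  obtain ⟨b, hb⟩ := (standardBasis m n).exists_eq_of_forall_mem_span
    (u := fun α => exteriorPower.ιMulti ℝ m (frame α)) fun β => by
      obtain ⟨c, -, hc⟩ := exists_ιMulti_single_eq_sum β
      have : standardBasis m n β = ∑ α, c α • exteriorPower.ιMulti ℝ m (frame α) := by
        ext1
        simp only [coe_standardBasis_apply, hc, Submodule.coe_sum, Submodule.coe_smul,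
          exteriorPower.ιMulti_apply_coe]
      rw [this]
      exact Submodule.sum_mem _ fun α _ => Submodule.smul_mem _ _ (Submodule.subset_span ⟨α, rfl⟩)
  exact ⟨b, fun α => by rw [hb]; rfl⟩

end WedgeFrame

open Matrix

theorem stmt_12_general (W : ℕ) :
    ∃ u : {α : Finset (Fin (W + W)) // α.card = W} → Fin W → (Fin (W + W) → ℝ),
      (∃ b : Module.Basis {α : Finset (Fin (W + W)) // α.card = W} ℝ
          (⋀[ℝ]^W (Fin (W + W) → ℝ)),
        ∀ α, (b α : ExteriorAlgebra ℝ (Fin (W + W) → ℝ)) =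
          ExteriorAlgebra.ιMulti ℝ W (u α)) ∧
      (∀ α,
        (∀ i j : Fin W, u α j (Fin.castAdd W i) = if i = j then 1 else 0) ∧
        ‖LinearMap.toContinuousLinearMap (Matrix.toEuclideanLin
          (Matrix.of fun i j : Fin W => u α j (Fin.natAdd W i)))‖ ≤ 1) ∧
      (∀ β : {α : Finset (Fin (W + W)) // α.card = W},
        ∃ c : {α : Finset (Fin (W + W)) // α.card = W} → ℝ,
          (∀ α, |c α| ≤ 1) ∧
          ExteriorAlgebra.ιMulti ℝ W
              (fun i : Fin W => Pi.single ((β.1.orderIsoOfFin β.2) i : Fin (W + W)) (1 : ℝ)) =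
            ∑ α, c α • ExteriorAlgebra.ιMulti ℝ W (u α)) := by
  refine ⟨WedgeFrame.frame, WedgeFrame.exists_basis_ιMulti_frame,
    fun α => ⟨WedgeFrame.frame_castAdd α, WedgeFrame.norm_lowerBlock_frame_le_one α⟩, fun β => ?_⟩
  simpa only [coe_orderIsoOfFin_apply] using WedgeFrame.exists_ιMulti_single_eq_sum β

theorem stmt_12 (W : ℕ) (hW : 1 ≤ W) :
    ∃ u : {α : Finset (Fin (W + W)) // α.card = W} → Fin W → (Fin (W + W) → ℝ),
      (∃ b : Module.Basis {α : Finset (Fin (W + W)) // α.card = W} ℝ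
          (⋀[ℝ]^W (Fin (W + W) → ℝ)),
        ∀ α, (b α : ExteriorAlgebra ℝ (Fin (W + W) → ℝ)) =
          ExteriorAlgebra.ιMulti ℝ W (u α)) ∧
      (∀ α,
        (∀ i j : Fin W, u α j (Fin.castAdd W i) = if i = j then 1 else 0) ∧
        ‖LinearMap.toContinuousLinearMap (Matrix.toEuclideanLin
          (Matrix.of fun i j : Fin W => u α j (Fin.natAdd W i)))‖ ≤ 1) ∧
      (∀ β : {α : Finset (Fin (W + W)) // α.card = W},
        ∃ c : {α : Finset (Fin (W + W)) // α.card = W} → ℝ,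
          (∀ α, |c α| ≤ 1) ∧
          ExteriorAlgebra.ιMulti ℝ W
              (fun i : Fin W => Pi.single ((β.1.orderIsoOfFin β.2) i : Fin (W + W)) (1 : ℝ)) =
            ∑ α, c α • ExteriorAlgebra.ιMulti ℝ W (u α)) :=
  stmt_12_general W
end

section
/- Let μ be a Borel probability measure on ℝ and let I ⊂ ℝ be a nondegenerate bounded interval with M = sup_{x∈I}|x|, and suppose μ({ζ : |ζ| > R}) ≤ C₀/R for R ≥ C₁ with C₀, C₁ ≥ 1. Then for every K ≥ A·max(1, log M, −log|I|, log C₀, log C₁) with A a sufficiently large absolute constant, the product measure satisfies (μ × m_I)({(ζ,x) : |log|x − ζ|| > K}) ≤ exp(−K/2). -/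
/-!
Split the event `K < |log |x - ζ||` into the far part `e^K < |x - ζ|` and the near part
`|x - ζ| < e^{-K}`. Since `|x| ≤ M` on `I`, the far part forces `|ζ| > e^K - M ≥ e^K / 2`, which
the tail bound controls by `2 C₀ e^{-K}`; each `ζ`-fibre of the near part is an interval of
length `2 e^{-K}`, of `m_I`-measure at most `2 e^{-K} / |I|`. For `K ≥ 10 max(1, log M, …)`
every one of `M, 1/|I|, C₀, C₁` is at most `e^{K/10}`, and the two bounds add up to at most
`4 e^{-9K/10} ≤ e^{-K/2}`.
-/

open MeasureTheory Real ProbabilityTheory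

namespace Real

theorem exp_lt_abs_or_abs_lt_exp_neg_of_lt_abs_log {K t : ℝ} (hK : 0 ≤ K)
    (h : K < abs (log |t|)) : exp K < |t| ∨ |t| < exp (-K) := by
  have ht : 0 < |t| := by
    refine abs_pos.mpr fun ht => ?_
    rw [ht, abs_zero, log_zero, abs_zero] at h
    linarith
  rcases lt_abs.mp h with h | h
  · exact Or.inl ((lt_log_iff_exp_lt ht).mp h)
  · exact Or.inr ((log_lt_iff_lt_exp ht).mp (by linarith))

theorem exp_div_ten_le_exp_div_two {K : ℝ} (hK : 10 ≤ K) : exp (K / 10) ≤ exp K / 2 := by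
  have h2 : 2 ≤ exp (9 * K / 10) := by linarith [add_one_le_exp (9 * K / 10)]
  have hsplit : exp K = exp (K / 10) * exp (9 * K / 10) := by rw [← exp_add]; ring_nf
  nlinarith [exp_pos (K / 10)]

theorem div_add_inv_mul_le_exp_neg_half {K M w C₀ : ℝ} (hK : 10 ≤ K)
    (hM : M ≤ exp (K / 10)) (hw : w⁻¹ ≤ exp (K / 10)) (hC₀ : C₀ ≤ exp (K / 10)) :
    C₀ / (exp K - M) + w⁻¹ * (2 * exp (-K)) ≤ exp (-K / 2) := by
  have hR : exp K / 2 ≤ exp K - M := by linarith [exp_div_ten_le_exp_div_two hK]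
  have hR0 : 0 < exp K / 2 := by positivity
  have hE : exp (K / 10) * exp (-K) = exp (-(9 * K / 10)) := by rw [← exp_add]; ring_nf
  have hsplit : exp (-K / 2) = exp (-(9 * K / 10)) * exp (2 * K / 5) := by
    rw [← exp_add]; ring_nf
  have h4 : 4 ≤ exp (2 * K / 5) := by linarith [add_one_le_exp (2 * K / 5)]
  have hfar : C₀ / (exp K - M) ≤ 2 * exp (-(9 * K / 10)) := by
    rw [div_le_iff₀ (hR0.trans_le hR), ← hE]
    calc C₀ ≤ exp (K / 10) * (exp (-K) * exp K) := by rw [← exp_add]; simpa using hC₀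
      _ = 2 * (exp (K / 10) * exp (-K)) * (exp K / 2) := by ring
      _ ≤ 2 * (exp (K / 10) * exp (-K)) * (exp K - M) := by gcongr
  have hnear : w⁻¹ * (2 * exp (-K)) ≤ 2 * exp (-(9 * K / 10)) := by
    rw [← hE]; nlinarith [exp_pos (-K)]
  nlinarith [exp_pos (-(9 * K / 10))]

end Real

namespace MeasureTheory.Measure

variable {α β : Type*} [MeasurableSpace α] [MeasurableSpace β]

theorem prod_apply_le_of_forall_le (μ : Measure α) [IsProbabilityMeasure μ] (ν : Measure β)
    {s : Set (α × β)} (hs : MeasurableSet s) {c : ENNReal}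
    (h : ∀ x, ν (Prod.mk x ⁻¹' s) ≤ c) : μ.prod ν s ≤ c :=
  calc μ.prod ν s ≤ ∫⁻ x, ν (Prod.mk x ⁻¹' s) ∂μ := prod_apply_le hs
    _ ≤ ∫⁻ _, c ∂μ := lintegral_mono h
    _ = c := by simp

end MeasureTheory.Measure

open Measure

theorem prod_setOf_abs_sub_lt_le (μ : Measure ℝ) [IsProbabilityMeasure μ] (ν : Measure ℝ)
    {r : ℝ} {c : ENNReal} (h : ∀ ζ, ν (Metric.ball ζ r) ≤ c) :
    μ.prod ν {p : ℝ × ℝ | |p.2 - p.1| < r} ≤ c := by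
  refine prod_apply_le_of_forall_le μ ν ?_ fun ζ => ?_
  · exact measurableSet_lt (measurable_snd.sub measurable_fst).abs measurable_const
  · convert h ζ using 2
    ext x
    simp [Real.dist_eq]

theorem prod_setOf_lt_abs_sub_le (μ ν : Measure ℝ) [IsProbabilityMeasure ν] {M r : ℝ}
    (hν : ν (Metric.closedBall 0 M)ᶜ = 0) :
    μ.prod ν {p : ℝ × ℝ | r < |p.2 - p.1|} ≤ μ {ζ | r - M < |ζ|} := by
  have hsub : {p : ℝ × ℝ | r < |p.2 - p.1|} ⊆
      {ζ | r - M < |ζ|} ×ˢ Set.univ ∪ Set.univ ×ˢ (Metric.closedBall 0 M)ᶜ := by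
    rintro ⟨ζ, x⟩ hp
    by_cases hx : x ∈ Metric.closedBall 0 M
    · rw [mem_closedBall_zero_iff, Real.norm_eq_abs] at hx
      have : |x - ζ| ≤ |x| + |ζ| := abs_sub _ _
      exact Or.inl ⟨show r - M < |ζ| by linarith [hp.out], trivial⟩
    · exact Or.inr ⟨trivial, hx⟩
  calc μ.prod ν _ ≤ μ.prod ν ({ζ | r - M < |ζ|} ×ˢ Set.univ)
        + μ.prod ν (Set.univ ×ˢ (Metric.closedBall 0 M)ᶜ) :=
        (measure_mono hsub).trans (measure_union_le _ _)
    _ ≤ μ {ζ | r - M < |ζ|} * ν Set.univ + μ Set.univ * ν (Metric.closedBall 0 M)ᶜ :=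
        add_le_add (prod_prod_le _ _) (prod_prod_le _ _)
    _ = μ {ζ | r - M < |ζ|} := by simp [hν]

section UniformIcc

variable {a b : ℝ}

theorem smul_restrict_Icc_eq_cond :
    (ENNReal.ofReal (b - a))⁻¹ • volume.restrict (Set.Icc a b) = volume[|Set.Icc a b] := by
  rw [ProbabilityTheory.cond, Real.volume_Icc]

theorem isProbabilityMeasure_cond_Icc (hab : a < b) :
    IsProbabilityMeasure (volume[|Set.Icc a b]) :=
  cond_isProbabilityMeasure_of_finite (by simpa using hab) (by simp)

theorem cond_Icc_compl_closedBall_eq_zero :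
    volume[|Set.Icc a b] (Metric.closedBall 0 (max |a| |b|))ᶜ = 0 := by
  have hsub : Set.Icc a b ⊆ Metric.closedBall 0 (max |a| |b|) := fun x hx => by
    rw [mem_closedBall_zero_iff, Real.norm_eq_abs]
    exact abs_le_max_abs_abs hx.1 hx.2
  rw [cond_apply measurableSet_Icc,
    Set.disjoint_iff_inter_eq_empty.mp (Set.disjoint_compl_right_iff_subset.mpr hsub)]
  simp

theorem cond_Icc_ball_le (ζ r : ℝ) :
    volume[|Set.Icc a b] (Metric.ball ζ r) ≤
      (ENNReal.ofReal (b - a))⁻¹ * ENNReal.ofReal (2 * r) := by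
  rw [cond_apply measurableSet_Icc, Real.volume_Icc, ← Real.volume_ball ζ r]
  gcongr
  exact Set.inter_subset_right

end UniformIcc

theorem stmt_16 :
    ∃ A : ℝ, 0 < A ∧
      ∀ (μ : Measure ℝ) (_ : IsProbabilityMeasure μ) (C₀ C₁ : ℝ) (_ : 1 ≤ C₀) (_ : 1 ≤ C₁)
        (_ : ∀ R : ℝ, C₁ ≤ R → μ {ζ : ℝ | |ζ| > R} ≤ ENNReal.ofReal (C₀ / R))
        (a b : ℝ) (_ : a < b) (K : ℝ),
        A * max 1 (max (Real.log (max |a| |b|))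
            (max (-Real.log (b - a)) (max (Real.log C₀) (Real.log C₁)))) ≤ K →
        (μ.prod ((ENNReal.ofReal (b - a))⁻¹ • volume.restrict (Set.Icc a b)))
            {p : ℝ × ℝ | abs (Real.log |p.2 - p.1|) > K}
          ≤ ENNReal.ofReal (Real.exp (-K / 2)) := by
  refine ⟨10, by norm_num, fun μ _ C₀ C₁ hC₀ hC₁ htail a b hab K hK => ?_⟩
  have hmax : max 1 (max (log (max |a| |b|))
      (max (-log (b - a)) (max (log C₀) (log C₁)))) ≤ K / 10 := by linarith
  simp only [max_le_iff, ← Real.log_inv] at hmax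
  obtain ⟨h1, hM, hw, hC₀K, hC₁K⟩ := hmax
  have hK : 10 ≤ K := by linarith
  have hw0 : 0 < b - a := sub_pos.mpr hab
  have := isProbabilityMeasure_cond_Icc hab
  rw [smul_restrict_Icc_eq_cond]
  have hsub : {p : ℝ × ℝ | abs (log |p.2 - p.1|) > K} ⊆
      {p | exp K < |p.2 - p.1|} ∪ {p | |p.2 - p.1| < exp (-K)} := fun p hp =>
    exp_lt_abs_or_abs_lt_exp_neg_of_lt_abs_log (by linarith) hp
  have hR : C₁ ≤ exp K - max |a| |b| := by
    linarith [exp_div_ten_le_exp_div_two hK, le_exp_of_log_le hM, le_exp_of_log_le hC₁K]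
  calc _ ≤ μ.prod _ {p | exp K < |p.2 - p.1|} + μ.prod _ {p | |p.2 - p.1| < exp (-K)} :=
        (measure_mono hsub).trans (measure_union_le _ _)
    _ ≤ ENNReal.ofReal (C₀ / (exp K - max |a| |b|))
          + (ENNReal.ofReal (b - a))⁻¹ * ENNReal.ofReal (2 * exp (-K)) :=
        add_le_add ((prod_setOf_lt_abs_sub_le μ _ cond_Icc_compl_closedBall_eq_zero).trans
          (htail _ hR)) (prod_setOf_abs_sub_lt_le μ _ fun ζ => cond_Icc_ball_le ζ _)
    _ = ENNReal.ofReal (C₀ / (exp K - max |a| |b|) + (b - a)⁻¹ * (2 * exp (-K))) := by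
        rw [← ENNReal.ofReal_inv_of_pos hw0, ← ENNReal.ofReal_mul (by positivity),
          ← ENNReal.ofReal_add (div_nonneg (by linarith) (by linarith)) (by positivity)]
    _ ≤ ENNReal.ofReal (exp (-K / 2)) := ENNReal.ofReal_le_ofReal <|
        div_add_inv_mul_le_exp_neg_half hK (le_exp_of_log_le hM) (le_exp_of_log_le hw)
          (le_exp_of_log_le hC₀K)
end

section
/- Let H₁ and H₂ be self-adjoint operators on the same finite-dimensional inner product space, let E ∈ ℝ not be an eigenvalue of H₁ or H₂, and set r = rank(H₁ − H₂). Then |log|det(H₁ − E)| − log|det(H₂ − E)|| ≤ 4r · max_{i∈{1,2}} max( log⁺(|E| + ‖H_i‖), log⁻ dist(E, spec H_i) ). -/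
/-!
Put `Aᵢ = Hᵢ - E`. The spectral theorem and the triangle inequality give
`e^{-M}‖x‖ ≤ ‖Aᵢ x‖ ≤ e^{M}‖x‖` for the quantity `M` on the right-hand side. Writing `A₁ = A₂ G`,
the map `G - 1 = A₂⁻¹ (H₁ - H₂)` has rank `r` and `‖G‖ ≤ e^{2M}`. Since `G` is the identity modulo
the range of `G - 1`, its determinant is that of its restriction to this `r`-dimensional subspace,
which a volume comparison bounds by `e^{2rM}`. By symmetry `|log |det A₁| - log |det A₂|| ≤ 2rM`.
-/

open Real Module MeasureTheory Metric

section NormedSpace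

variable {V : Type*} [NormedAddCommGroup V] [NormedSpace ℝ V]

namespace LinearMap

theorem injective_of_mul_norm_le {B : V →ₗ[ℝ] V} {b : ℝ} (hb : 0 < b)
    (hB : ∀ x, b * ‖x‖ ≤ ‖B x‖) : Function.Injective B := by
  refine (injective_iff_map_eq_zero B).2 fun x hx ↦ norm_le_zero_iff.1 ?_
  have := hB x
  rw [hx, norm_zero] at this
  exact nonpos_of_mul_nonpos_right this hb

variable [FiniteDimensional ℝ V]

theorem abs_det_le_pow_finrank (f : V →ₗ[ℝ] V) {c : ℝ} (hc : 0 ≤ c)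
    (hf : ∀ x, ‖f x‖ ≤ c * ‖x‖) : |LinearMap.det f| ≤ c ^ finrank ℝ V := by
  borelize V
  let μ : Measure V := Measure.addHaar
  have himage : f '' closedBall 0 1 ⊆ closedBall 0 c := by
    rintro _ ⟨x, hx, rfl⟩
    rw [mem_closedBall_zero_iff] at hx ⊢
    calc ‖f x‖ ≤ c * ‖x‖ := hf x
      _ ≤ c := mul_le_of_le_one_right hc hx
  have hvol := measure_mono (μ := μ) himage
  rw [Measure.addHaar_image_linearMap, Measure.addHaar_closedBall' μ 0 hc] at hvol
  have hball : μ (closedBall 0 1) ≠ 0 := (measure_closedBall_pos μ 0 one_pos).ne'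
  exact (ENNReal.ofReal_le_ofReal_iff (by positivity)).1
    ((ENNReal.mul_le_mul_iff_left hball measure_closedBall_lt_top.ne).1 hvol)

/-- `f` acts as the identity on `V ⧸ range (f - id)`, so only the restriction to that range
contributes to the determinant. -/
theorem abs_det_le_pow_finrank_range_sub_id (f : V →ₗ[ℝ] V) {c : ℝ} (hc : 0 ≤ c)
    (hf : ∀ x, ‖f x‖ ≤ c * ‖x‖) : |LinearMap.det f| ≤ c ^ finrank ℝ (range (f - id)) := by
  set W := range (f - id)
  have hW : W ≤ W.comap f := fun w hw ↦ by
    simpa using W.add_mem hw (mem_range_self (f - id) w)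
  have hquot : W.mapQ W f hW = id := by
    ext x
    simp only [coe_comp, Function.comp_apply, Submodule.mkQ_apply, Submodule.mapQ_apply,
      id_coe, id_eq, Submodule.Quotient.eq]
    exact mem_range_self (f - id) x
  rw [det_eq_det_mul_det W f hW, hquot, det_id, mul_one]
  exact abs_det_le_pow_finrank (f.restrict hW) hc fun w ↦ hf w

theorem det_ne_zero_of_mul_norm_le {B : V →ₗ[ℝ] V} {b : ℝ} (hb : 0 < b)
    (hB : ∀ x, b * ‖x‖ ≤ ‖B x‖) : LinearMap.det B ≠ 0 :=
  (LinearEquiv.ofInjectiveEndo B (injective_of_mul_norm_le hb hB)).isUnit_det'.ne_zero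

/-- Writing `A = B ∘ G`, the map `G - id = B⁻¹ ∘ (A - B)` has the rank of `A - B`, and `G`
stretches lengths by at most `a / b`. -/
theorem abs_det_le_of_norm_bounds (A B : V →ₗ[ℝ] V) {a b : ℝ} (ha : 0 ≤ a) (hb : 0 < b)
    (hA : ∀ x, ‖A x‖ ≤ a * ‖x‖) (hB : ∀ x, b * ‖x‖ ≤ ‖B x‖) :
    |LinearMap.det A| ≤ (a / b) ^ finrank ℝ (range (A - B)) * |LinearMap.det B| := by
  let e := LinearEquiv.ofInjectiveEndo B (injective_of_mul_norm_le hb hB)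
  let G := e.symm.toLinearMap ∘ₗ A
  have hAG : A = B ∘ₗ G := by
    ext x
    exact (e.apply_symm_apply (A x)).symm
  have hGsub : G - id = e.symm.toLinearMap ∘ₗ (A - B) := by
    ext x
    simp only [sub_apply, comp_apply, map_sub, id_apply, G]
    exact congrArg _ (e.symm_apply_apply x).symm
  have hrank : finrank ℝ (range (G - id)) = finrank ℝ (range (A - B)) := by
    rw [hGsub, range_comp, LinearEquiv.finrank_map_eq]
  have hG : ∀ x, ‖G x‖ ≤ a / b * ‖x‖ := by
    intro x
    rw [div_mul_eq_mul_div, le_div_iff₀' hb]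
    calc b * ‖G x‖ ≤ ‖B (G x)‖ := hB (G x)
      _ = ‖A x‖ := by rw [← comp_apply, ← hAG]
      _ ≤ a * ‖x‖ := hA x
  calc |LinearMap.det A| = |LinearMap.det G| * |LinearMap.det B| := by
        rw [hAG, det_comp, abs_mul, mul_comm]
    _ ≤ (a / b) ^ finrank ℝ (range (A - B)) * |LinearMap.det B| := by
        rw [← hrank]
        gcongr
        exact abs_det_le_pow_finrank_range_sub_id G (by positivity) hG

theorem log_abs_det_le_of_norm_bounds (A B : V →ₗ[ℝ] V) {a b : ℝ} (ha : 0 < a) (hb : 0 < b)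
    (hA : ∀ x, ‖A x‖ ≤ a * ‖x‖) (hA' : ∀ x, b * ‖x‖ ≤ ‖A x‖) (hB : ∀ x, b * ‖x‖ ≤ ‖B x‖) :
    log |LinearMap.det A| ≤ finrank ℝ (range (A - B)) * log (a / b) + log |LinearMap.det B| := by
  have hpow : (a / b) ^ finrank ℝ (range (A - B)) ≠ 0 := by positivity
  rw [← log_pow, ← log_mul hpow (abs_ne_zero.2 (det_ne_zero_of_mul_norm_le hb hB))]
  exact log_le_log (abs_pos.2 (det_ne_zero_of_mul_norm_le hb hA'))
    (abs_det_le_of_norm_bounds A B ha.le hb hA hB)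

theorem abs_log_abs_det_sub_le (A B : V →ₗ[ℝ] V) {a b : ℝ} (ha : 0 < a) (hb : 0 < b)
    (hA : ∀ x, ‖A x‖ ≤ a * ‖x‖) (hA' : ∀ x, b * ‖x‖ ≤ ‖A x‖)
    (hB : ∀ x, ‖B x‖ ≤ a * ‖x‖) (hB' : ∀ x, b * ‖x‖ ≤ ‖B x‖) :
    abs (log |LinearMap.det A| - log |LinearMap.det B|) ≤
      finrank ℝ (range (A - B)) * log (a / b) := by
  have hAB := log_abs_det_le_of_norm_bounds A B ha hb hA hA' hB'
  have hBA := log_abs_det_le_of_norm_bounds B A ha hb hB hB' hA'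
  rw [← neg_sub, range_neg] at hBA
  exact abs_sub_le_iff.2 ⟨by linarith, by linarith⟩

end LinearMap

end NormedSpace

section InnerProductSpace

variable {𝕜 V : Type*} [RCLike 𝕜] [NormedAddCommGroup V] [InnerProductSpace 𝕜 V]
  [FiniteDimensional 𝕜 V]

/-- In an orthonormal eigenbasis `T - E` multiplies the `i`-th coordinate by `μᵢ - E`. -/
theorem LinearMap.IsSymmetric.mul_norm_le_norm_sub_smul {T : V →ₗ[𝕜] V} (hT : T.IsSymmetric)
    {E b : ℝ} (hb : 0 ≤ b) (hgap : ∀ μ : ℝ, Module.End.HasEigenvalue T (μ : 𝕜) → b ≤ |μ - E|)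
    (x : V) : b * ‖x‖ ≤ ‖T x - (E : 𝕜) • x‖ := by
  let e := hT.eigenvectorBasis rfl
  let μ := hT.eigenvalues rfl
  have hcoord : ∀ i, ‖e.repr (T x - (E : 𝕜) • x) i‖ = |μ i - E| * ‖e.repr x i‖ := by
    intro i
    rw [map_sub, map_smul, PiLp.sub_apply, PiLp.smul_apply, hT.eigenvectorBasis_apply_self_apply,
      smul_eq_mul, ← sub_mul, norm_mul, ← RCLike.ofReal_sub, RCLike.norm_ofReal]
  have hsq : (b * ‖x‖) ^ 2 ≤ ‖T x - (E : 𝕜) • x‖ ^ 2 := by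
    rw [← e.repr.norm_map x, ← e.repr.norm_map (T x - _), mul_pow, EuclideanSpace.norm_sq_eq,
      EuclideanSpace.norm_sq_eq, Finset.mul_sum]
    gcongr with i
    rw [hcoord, mul_pow]
    gcongr
    exact hgap _ (hT.hasEigenvalue_eigenvalues rfl i)
  exact (pow_le_pow_iff_left₀ (by positivity) (norm_nonneg _) two_ne_zero).1 hsq

end InnerProductSpace

theorem ContinuousLinearMap.norm_sub_smul_one_apply_le {V : Type*} [NormedAddCommGroup V]
    [NormedSpace ℝ V] (H : V →L[ℝ] V) {E M : ℝ} (hM : log (|E| + ‖H‖) ≤ M) (x : V) :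
    ‖(H - E • 1) x‖ ≤ exp M * ‖x‖ := by
  have hnorm : ‖H - E • 1‖ ≤ |E| + ‖H‖ :=
    calc ‖H - E • 1‖ ≤ ‖H‖ + ‖E‖ * ‖(1 : V →L[ℝ] V)‖ :=
          (norm_sub_le _ _).trans (by gcongr; exact norm_smul_le E (1 : V →L[ℝ] V))
      _ ≤ ‖H‖ + ‖E‖ := by gcongr; exact mul_le_of_le_one_right (norm_nonneg E) norm_id_le
      _ = |E| + ‖H‖ := by rw [norm_eq_abs, add_comm]
  calc ‖(H - E • 1) x‖ ≤ ‖H - E • 1‖ * ‖x‖ := le_opNorm _ x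
    _ ≤ exp M * ‖x‖ := by
      gcongr
      exact hnorm.trans ((le_exp_log _).trans (exp_le_exp.2 hM))

theorem IsSelfAdjoint.exp_neg_mul_norm_le_norm_sub_smul_one_apply {V : Type*}
    [NormedAddCommGroup V] [InnerProductSpace ℝ V] [FiniteDimensional ℝ V] {H : V →L[ℝ] V}
    (hH : IsSelfAdjoint H) {E M : ℝ} (hE : E ∉ spectrum ℝ H)
    (hM : -log (infDist E (spectrum ℝ H)) ≤ M) (x : V) :
    Real.exp (-M) * ‖x‖ ≤ ‖(H - E • 1) x‖ := by
  refine (hH.isSymmetric.mul_norm_le_norm_sub_smul (E := E) (Real.exp_pos _).le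
    (fun μ hμ ↦ ?_) x).trans_eq (by simp)
  have hμH : μ ∈ spectrum ℝ H := ContinuousLinearMap.spectrum_eq (f := H) ▸ hμ.mem_spectrum
  have hd : 0 < infDist E (spectrum ℝ H) :=
    ((spectrum.isClosed H).notMem_iff_infDist_pos ⟨μ, hμH⟩).1 hE
  calc Real.exp (-M) ≤ Real.exp (log (infDist E (spectrum ℝ H))) := Real.exp_le_exp.2 (by linarith)
    _ = infDist E (spectrum ℝ H) := Real.exp_log hd
    _ ≤ dist E μ := infDist_le_dist_of_mem hμH
    _ = |μ - E| := by rw [Real.dist_eq, abs_sub_comm]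

theorem stmt_19 (n : ℕ)
    (H₁ H₂ : EuclideanSpace ℝ (Fin n) →L[ℝ] EuclideanSpace ℝ (Fin n))
    (h₁ : IsSelfAdjoint H₁) (h₂ : IsSelfAdjoint H₂) (E : ℝ)
    (hE₁ : E ∉ spectrum ℝ H₁) (hE₂ : E ∉ spectrum ℝ H₂) :
    abs (Real.log (abs (LinearMap.det ((H₁ - E • 1 :
        EuclideanSpace ℝ (Fin n) →L[ℝ] EuclideanSpace ℝ (Fin n)) :
        EuclideanSpace ℝ (Fin n) →ₗ[ℝ] EuclideanSpace ℝ (Fin n)))) -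
      Real.log (abs (LinearMap.det ((H₂ - E • 1 :
        EuclideanSpace ℝ (Fin n) →L[ℝ] EuclideanSpace ℝ (Fin n)) :
        EuclideanSpace ℝ (Fin n) →ₗ[ℝ] EuclideanSpace ℝ (Fin n))))) ≤
    4 * (Module.finrank ℝ (LinearMap.range ((H₁ - H₂ :
        EuclideanSpace ℝ (Fin n) →L[ℝ] EuclideanSpace ℝ (Fin n)) :
        EuclideanSpace ℝ (Fin n) →ₗ[ℝ] EuclideanSpace ℝ (Fin n)))) *
      max
        (max (max (Real.log (|E| + ‖H₁‖)) 0)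
          (max (-Real.log (Metric.infDist E (spectrum ℝ H₁))) 0))
        (max (max (Real.log (|E| + ‖H₂‖)) 0)
          (max (-Real.log (Metric.infDist E (spectrum ℝ H₂))) 0)) := by
  set M := max
    (max (max (Real.log (|E| + ‖H₁‖)) 0) (max (-Real.log (Metric.infDist E (spectrum ℝ H₁))) 0))
    (max (max (Real.log (|E| + ‖H₂‖)) 0) (max (-Real.log (Metric.infDist E (spectrum ℝ H₂))) 0))
  have hM : 0 ≤ M := le_max_of_le_left (le_max_of_le_left (le_max_right _ _))
  have key := LinearMap.abs_log_abs_det_sub_le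
    ((H₁ - E • 1 : EuclideanSpace ℝ (Fin n) →L[ℝ] EuclideanSpace ℝ (Fin n)) :
      EuclideanSpace ℝ (Fin n) →ₗ[ℝ] EuclideanSpace ℝ (Fin n))
    ((H₂ - E • 1 : EuclideanSpace ℝ (Fin n) →L[ℝ] EuclideanSpace ℝ (Fin n)) :
      EuclideanSpace ℝ (Fin n) →ₗ[ℝ] EuclideanSpace ℝ (Fin n)) (exp_pos M) (exp_pos (-M))
    (H₁.norm_sub_smul_one_apply_le
      (le_max_of_le_left (le_max_of_le_left (le_max_left _ _))))
    (h₁.exp_neg_mul_norm_le_norm_sub_smul_one_apply hE₁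
      (le_max_of_le_left (le_max_of_le_right (le_max_left _ _))))
    (H₂.norm_sub_smul_one_apply_le
      (le_max_of_le_right (le_max_of_le_left (le_max_left _ _))))
    (h₂.exp_neg_mul_norm_le_norm_sub_smul_one_apply hE₂
      (le_max_of_le_right (le_max_of_le_right (le_max_left _ _))))
  rw [← ContinuousLinearMap.toLinearMap_sub, sub_sub_sub_cancel_right, ← exp_sub, log_exp] at key
  refine key.trans ?_
  rw [mul_comm 4, mul_assoc]
  gcongr
  linarith
end
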